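/- arXiv:2110.01348 — 13 statements merged into one kernel-verified Lean document; each statement's English description precedes it below -/
import Mathlib

section
/- Let V be a real Hilbert space, S : V →L[ℝ] V a continuous linear operator with ⟪S φ, φ⟫ ≥ 0 for all φ ∈ V, and w₀ ∈ V. Define w : ℝ → V by w(t) := exp(-t S) w₀. Then w is infinitely differentiable, w(0) = w₀, w satisfies the abstract Sobolev equation w'(t) = -S (w(t)) for every t ∈ ℝ, and for every t ≥ 0 the stability bound ‖w(t)‖ ≤ ‖w₀‖ holds. -/
open RealInnerProductSpace

theorem abstract_sobolev_equation_wellposed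
    {V : Type*} [NormedAddCommGroup V] [InnerProductSpace ℝ V] [CompleteSpace V]
    (S : V →L[ℝ] V) (hS : ∀ φ : V, 0 ≤ ⟪S φ, φ⟫)
    (w₀ : V) (w : ℝ → V)
    (hw : ∀ t : ℝ, w t = NormedSpace.exp (-(t • S)) w₀) :
    ContDiff ℝ (⊤ : ℕ∞) w ∧ w 0 = w₀ ∧
      (∀ t : ℝ, HasDerivAt w (-(S (w t))) t) ∧
      ∀ t : ℝ, 0 ≤ t → ‖w t‖ ≤ ‖w₀‖ := by
  have hw' : ∀ t : ℝ, w t = NormedSpace.exp (t • (-S)) w₀ := by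
    intro t; rw [hw t, smul_neg]
  -- derivative
  have hderiv : ∀ t : ℝ, HasDerivAt w (-(S (w t))) t := by
    intro t
    have h1 : HasDerivAt (fun u : ℝ => NormedSpace.exp (u • (-S)))
        ((-S) * NormedSpace.exp (t • (-S))) t :=
      hasDerivAt_exp_smul_const' (-S) t
    have h3 : HasDerivAt (fun u : ℝ => NormedSpace.exp (u • (-S)) w₀)
        (((-S) * NormedSpace.exp (t • (-S))) w₀) t :=
      (ContinuousLinearMap.apply ℝ V w₀).hasFDerivAt.comp_hasDerivAt t h1
    have h4 : HasDerivAt w (((-S) * NormedSpace.exp (t • (-S))) w₀) t := by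
      apply h3.congr_of_eventuallyEq
      filter_upwards with u using (hw' u)
    have heq : ((-S) * NormedSpace.exp (t • (-S))) w₀ = -(S (w t)) := by
      rw [ContinuousLinearMap.mul_apply, ← hw' t, ContinuousLinearMap.neg_apply]
    exact heq ▸ h4
  have hdiff : Differentiable ℝ w := fun t => (hderiv t).differentiableAt
  -- analyticity
  have hsmooth : ContDiff ℝ (⊤ : ℕ∞) w := by
    rw [contDiff_iff_contDiffAt]
    intro t
    apply ContDiffAt.congr_of_eventuallyEq (f := fun u : ℝ =>
      NormedSpace.exp (u • (-S)) w₀)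
    · apply AnalyticAt.contDiffAt
      have hl : AnalyticAt ℝ (fun u : ℝ => u • (-S)) t :=
        ((1 : ℝ →L[ℝ] ℝ).smulRight (-S)).analyticAt t
      have hexp : AnalyticAt ℝ (NormedSpace.exp) (t • (-S)) := by
        obtain ⟨p, hp⟩ := NormedSpace.analyticAt_exp_of_mem_ball (𝕂 := ℝ)
          (t • (-S)) (by
            rw [NormedSpace.expSeries_radius_eq_top]
            exact edist_lt_top _ _)
        exact ⟨p, hp⟩
      exact ((ContinuousLinearMap.apply ℝ V w₀).analyticAt _).comp
        (AnalyticAt.comp (g := NormedSpace.exp) (f := fun u : ℝ => u • (-S)) hexp hl)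
    · filter_upwards with u using (hw' u)
  refine ⟨hsmooth, by simp [hw 0], hderiv, ?_⟩
  -- stability
  intro t ht
  have key : ∀ s : ℝ, ‖w s‖ ^ 2 = ⟪w s, w s⟫ := fun s =>
    (real_inner_self_eq_norm_sq (w s)).symm
  have hg : ∀ s : ℝ, HasDerivAt (fun u => ⟪w u, w u⟫)
      (⟪w s, -(S (w s))⟫ + ⟪-(S (w s)), w s⟫) s := fun s =>
    (hderiv s).inner ℝ (hderiv s)
  have hmono : AntitoneOn (fun u => ⟪w u, w u⟫) (Set.Ici (0 : ℝ)) := by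
    apply antitoneOn_of_deriv_nonpos (convex_Ici 0)
    · exact (hdiff.continuous.inner hdiff.continuous).continuousOn
    · intro s _
      exact (hg s).differentiableAt.differentiableWithinAt
    · intro s _
      rw [(hg s).deriv]
      have := hS (w s)
      have h1 : ⟪-(S (w s)), w s⟫ = -⟪S (w s), w s⟫ := by rw [inner_neg_left]
      have h2 : ⟪w s, -(S (w s))⟫ = -⟪S (w s), w s⟫ := by
        rw [inner_neg_right, real_inner_comm]
      rw [h1, h2]; linarith
  have hle : ⟪w t, w t⟫ ≤ ⟪w 0, w 0⟫ := hmono Set.self_mem_Ici ht ht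
  have hsq : ‖w t‖ ^ 2 ≤ ‖w₀‖ ^ 2 := by
    rw [key t]
    calc ⟪w t, w t⟫ ≤ ⟪w 0, w 0⟫ := hle
    _ = ‖w 0‖ ^ 2 := (key 0).symm
    _ = ‖w₀‖ ^ 2 := by rw [show w 0 = w₀ by simp [hw 0]]
  calc ‖w t‖ = Real.sqrt (‖w t‖ ^ 2) := by rw [Real.sqrt_sq (norm_nonneg _)]
  _ ≤ Real.sqrt (‖w₀‖ ^ 2) := Real.sqrt_le_sqrt hsq
  _ = ‖w₀‖ := Real.sqrt_sq (norm_nonneg _)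
end

section
/- Let W be a real Hilbert space, 0 < α ≤ C_M, C_R > 0, M : W →L[ℝ] W self-adjoint with α‖φ‖² ≤ ⟪M φ, φ⟫ ≤ C_M‖φ‖² for all φ ∈ W, R : W →L[ℝ] W with operator norm ‖R‖ ≤ C_R, and V ⊆ W a closed subspace. Let e ∈ W and let w ∈ V be the unique element with ⟪M(e + w), v⟫ = 0 for all v ∈ V. Then there exists a unique g ∈ V such that ⟪M g + R(e + w), v⟫ = 0 for all v ∈ V, and it satisfies ‖g‖_m ≤ 2 (C_R / α) √C_M · ‖e‖, where ‖φ‖_m := √⟪M φ, φ⟫. -/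
/-!
Existence and uniqueness are Lax–Milgram for the coercive form `⟪M ·, ·⟫` on `V`. Testing the
equation for `g` with `g` itself gives `α ‖g‖_m² ≤ ‖R (e + w)‖² ≤ C_R² ‖e + w‖²`. Since `e + w` is
`M`-orthogonal to `w ∈ V`, Pythagoras for `e = (e + w) - w` gives `‖e + w‖_m ≤ ‖e‖_m`, hence
`α ‖e + w‖² ≤ ‖e + w‖_m² ≤ C_M ‖e‖²`.
-/

open RealInnerProductSpace

section CoerciveForm

variable {W : Type*} [NormedAddCommGroup W] [InnerProductSpace ℝ W] {M : W →L[ℝ] W} {α : ℝ}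

theorem exists_mem_forall_inner_map_add_eq_zero (hα : 0 < α)
    (hMl : ∀ φ : W, α * ‖φ‖ ^ 2 ≤ ⟪M φ, φ⟫) (V : Submodule ℝ W) [CompleteSpace V] (f : W) :
    ∃ g ∈ V, ∀ v ∈ V, ⟪M g + f, v⟫ = 0 := by
  set B : V →L[ℝ] V →L[ℝ] ℝ := ((innerSL ℝ).comp M).bilinearComp V.subtypeL V.subtypeL
  have hB : IsCoercive B := ⟨α, hα, fun u => by simpa [B, sq, mul_assoc] using hMl u⟩
  set g := hB.continuousLinearEquivOfBilin.symm (V.orthogonalProjectionOnto (-f))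
  refine ⟨g, g.2, fun v hv => ?_⟩
  have h : ⟪-f, v⟫ = ⟪M g, v⟫ := by
    have h := hB.continuousLinearEquivOfBilin_apply g ⟨v, hv⟩
    rwa [ContinuousLinearEquiv.apply_symm_apply,
      Submodule.inner_orthogonalProjectionOnto_eq_of_mem_right] at h
  rw [inner_add_left, ← h, inner_neg_left, neg_add_cancel]

theorem eq_of_forall_inner_map_add_eq_zero (hα : 0 < α)
    (hMl : ∀ φ : W, α * ‖φ‖ ^ 2 ≤ ⟪M φ, φ⟫) {V : Submodule ℝ W} {f g g' : W}
    (hgV : g ∈ V) (hg'V : g' ∈ V) (hg : ∀ v ∈ V, ⟪M g + f, v⟫ = 0)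
    (hg' : ∀ v ∈ V, ⟪M g' + f, v⟫ = 0) : g' = g := by
  have hd : ⟪M (g' - g), g' - g⟫ = 0 := by
    have hmem := V.sub_mem hg'V hgV
    have h₁ := hg' _ hmem
    have h₂ := hg _ hmem
    rw [inner_add_left] at h₁ h₂
    rw [map_sub, inner_sub_left]
    linarith
  have hn : ‖g' - g‖ ^ 2 = 0 :=
    le_antisymm (by nlinarith [hMl (g' - g)]) (sq_nonneg _)
  rwa [sq_eq_zero_iff, norm_eq_zero, sub_eq_zero] at hn

theorem mul_inner_map_self_le_sq_norm (hα : 0 ≤ α) (hMl : ∀ φ : W, α * ‖φ‖ ^ 2 ≤ ⟪M φ, φ⟫)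
    {f g : W} (hg : ⟪M g + f, g⟫ = 0) : α * ⟪M g, g⟫ ≤ ‖f‖ ^ 2 := by
  have hMg : ⟪M g, g⟫ ≤ ‖f‖ * ‖g‖ := by
    rw [inner_add_left] at hg
    linarith [neg_le_abs ⟪f, g⟫, abs_real_inner_le_norm f g]
  nlinarith [hMl g, sq_nonneg (‖f‖ - α * ‖g‖), mul_le_mul_of_nonneg_left hMg hα,
    mul_le_mul_of_nonneg_left (hMl g) hα]

theorem inner_map_add_self_le (hMsa : ∀ φ ψ : W, ⟪M φ, ψ⟫ = ⟪φ, M ψ⟫)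
    (hM₀ : ∀ φ : W, 0 ≤ ⟪M φ, φ⟫) {e w : W} (hw : ⟪M (e + w), w⟫ = 0) :
    ⟪M (e + w), e + w⟫ ≤ ⟪M e, e⟫ := by
  have hw' : ⟪M w, e + w⟫ = 0 := by rw [hMsa, real_inner_comm, hw]
  have : ⟪M e, e⟫ = ⟪M (e + w), e + w⟫ + ⟪M w, w⟫ := by
    have he : e = (e + w) - w := (add_sub_cancel_right e w).symm
    conv_lhs => rw [he]
    simp only [map_sub, inner_sub_left, inner_sub_right, hw, hw']
    ring
  linarith [hM₀ w]

end CoerciveForm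

theorem time_dependent_cell_corrector_initial_value_wellposed_general
    {W : Type*} [NormedAddCommGroup W] [InnerProductSpace ℝ W] [CompleteSpace W]
    (α C_M C_R : ℝ) (hα : 0 < α) (hαC : α ≤ C_M)
    (M : W →L[ℝ] W) (hMsa : ∀ φ ψ : W, ⟪M φ, ψ⟫ = ⟪φ, M ψ⟫)
    (hMl : ∀ φ : W, α * ‖φ‖ ^ 2 ≤ ⟪M φ, φ⟫)
    (hMu : ∀ φ : W, ⟪M φ, φ⟫ ≤ C_M * ‖φ‖ ^ 2)
    (R : W →L[ℝ] W) (hR : ‖R‖ ≤ C_R)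
    (V : Submodule ℝ W) (hV : IsClosed (V : Set W))
    (e w : W) (hwV : w ∈ V)
    (hw : ∀ v ∈ V, ⟪M (e + w), v⟫ = 0) :
    ∃ g : W, g ∈ V ∧ (∀ v ∈ V, ⟪M g + R (e + w), v⟫ = 0) ∧
      Real.sqrt ⟪M g, g⟫ ≤ 2 * (C_R / α) * Real.sqrt C_M * ‖e‖ ∧
      ∀ g' : W, g' ∈ V → (∀ v ∈ V, ⟪M g' + R (e + w), v⟫ = 0) → g' = g := by
  have : CompleteSpace V := hV.completeSpace_coe
  obtain ⟨g, hgV, hg⟩ := exists_mem_forall_inner_map_add_eq_zero hα hMl V (R (e + w))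
  refine ⟨g, hgV, hg, ?_,
    fun g' hg'V hg' => eq_of_forall_inner_map_add_eq_zero hα hMl hgV hg'V hg hg'⟩
  have hC_R : 0 ≤ C_R := (norm_nonneg R).trans hR
  have hC_M : 0 ≤ C_M := hα.le.trans hαC
  have hM₀ : ∀ φ : W, 0 ≤ ⟪M φ, φ⟫ := fun φ => (mul_nonneg hα.le (sq_nonneg _)).trans (hMl φ)
  have hx : ⟪M (e + w), e + w⟫ ≤ C_M * ‖e‖ ^ 2 :=
    (inner_map_add_self_le hMsa hM₀ (hw w hwV)).trans (hMu e)
  have hg_energy := mul_inner_map_self_le_sq_norm hα.le hMl (hg g hgV)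
  have hRx : ‖R (e + w)‖ ≤ C_R * ‖e + w‖ := R.le_of_opNorm_le hR _
  have hsq : α ^ 2 * ⟪M g, g⟫ ≤ C_R ^ 2 * C_M * ‖e‖ ^ 2 :=
    calc α ^ 2 * ⟪M g, g⟫ = α * (α * ⟪M g, g⟫) := by ring
      _ ≤ α * (C_R * ‖e + w‖) ^ 2 := by gcongr; exact hg_energy.trans (by gcongr)
      _ = C_R ^ 2 * (α * ‖e + w‖ ^ 2) := by ring
      _ ≤ C_R ^ 2 * (C_M * ‖e‖ ^ 2) := mul_le_mul_of_nonneg_left ((hMl _).trans hx) (sq_nonneg _)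
      _ = C_R ^ 2 * C_M * ‖e‖ ^ 2 := by ring
  have hr : 0 ≤ C_R / α * Real.sqrt C_M * ‖e‖ := by positivity
  have hbound : Real.sqrt ⟪M g, g⟫ ≤ C_R / α * Real.sqrt C_M * ‖e‖ := by
    rw [Real.sqrt_le_left hr, mul_pow, mul_pow, div_pow, Real.sq_sqrt hC_M,
      div_mul_eq_mul_div, div_mul_eq_mul_div, le_div_iff₀ (by positivity)]
    linarith
  linarith

theorem time_dependent_cell_corrector_initial_value_wellposed
    {W : Type*} [NormedAddCommGroup W] [InnerProductSpace ℝ W] [CompleteSpace W]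
    (α C_M C_R : ℝ) (hα : 0 < α) (hαC : α ≤ C_M) (hCR : 0 < C_R)
    (M : W →L[ℝ] W) (hMsa : ∀ φ ψ : W, ⟪M φ, ψ⟫ = ⟪φ, M ψ⟫)
    (hMl : ∀ φ : W, α * ‖φ‖ ^ 2 ≤ ⟪M φ, φ⟫)
    (hMu : ∀ φ : W, ⟪M φ, φ⟫ ≤ C_M * ‖φ‖ ^ 2)
    (R : W →L[ℝ] W) (hR : ‖R‖ ≤ C_R)
    (V : Submodule ℝ W) (hV : IsClosed (V : Set W))
    (e w : W) (hwV : w ∈ V)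
    (hw : ∀ v ∈ V, ⟪M (e + w), v⟫ = 0)
    (hwuniq : ∀ w' : W, w' ∈ V → (∀ v ∈ V, ⟪M (e + w'), v⟫ = 0) → w' = w) :
    ∃ g : W, g ∈ V ∧ (∀ v ∈ V, ⟪M g + R (e + w), v⟫ = 0) ∧
      Real.sqrt ⟪M g, g⟫ ≤ 2 * (C_R / α) * Real.sqrt C_M * ‖e‖ ∧
      ∀ g' : W, g' ∈ V → (∀ v ∈ V, ⟪M g' + R (e + w), v⟫ = 0) → g' = g :=
  time_dependent_cell_corrector_initial_value_wellposed_general α C_M C_R hα hαC M hMsa hMl hMu R hR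
    V hV e w hwV hw
end

section
/- Let W be a real Hilbert space, α > 0, M : W →L[ℝ] W self-adjoint with ⟪M φ, φ⟫ ≥ α‖φ‖² for all φ ∈ W, and V ⊆ W a closed subspace. Let n ∈ ℕ, c > 0, and let e₁, …, e_n ∈ W be pairwise orthogonal with ‖e_i‖² = c for every i and with each e_i orthogonal to V (⟪e_i, v⟫ = 0 for all v ∈ V). For each j let w_j ∈ V satisfy ⟪M(e_j + w_j), v⟫ = 0 for all v ∈ V, and define the effective matrix M⁰ ∈ ℝ^{n×n} by M⁰_{ij} := (1/c) ⟪M(e_j + w_j), e_i + w_i⟫. Then M⁰ is positive definite with the same constant α: for every ξ ∈ ℝⁿ one has Σ_{i,j} M⁰_{ij} ξ_i ξ_j ≥ α |ξ|². -/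
open RealInnerProductSpace

theorem effective_matrix_positive_definite
    {W : Type*} [NormedAddCommGroup W] [InnerProductSpace ℝ W] [CompleteSpace W]
    (α : ℝ) (hα : 0 < α)
    (M : W →L[ℝ] W) (hMsa : ∀ φ ψ : W, ⟪M φ, ψ⟫ = ⟪φ, M ψ⟫)
    (hMl : ∀ φ : W, α * ‖φ‖ ^ 2 ≤ ⟪M φ, φ⟫)
    (V : Submodule ℝ W) (hV : IsClosed (V : Set W))
    (n : ℕ) (c : ℝ) (hc : 0 < c)
    (e w : Fin n → W)
    (horth : ∀ i j, i ≠ j → ⟪e i, e j⟫ = 0)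
    (hnorm : ∀ i, ‖e i‖ ^ 2 = c)
    (heV : ∀ i, ∀ v ∈ V, ⟪e i, v⟫ = 0)
    (hwV : ∀ j, w j ∈ V)
    (hw : ∀ j, ∀ v ∈ V, ⟪M (e j + w j), v⟫ = 0)
    (M0 : Fin n → Fin n → ℝ)
    (hM0 : ∀ i j, M0 i j = (1 / c) * ⟪M (e j + w j), e i + w i⟫) :
    ∀ ξ : Fin n → ℝ, α * (∑ i, ξ i ^ 2) ≤ ∑ i, ∑ j, M0 i j * ξ i * ξ j := by
  intro ξ
  set u : W := ∑ j, ξ j • e j with hu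
  set v : W := ∑ j, ξ j • w j with hv
  set φ : W := u + v with hφ
  -- cross term vanishes
  have hvV : v ∈ V := Submodule.sum_mem V (fun j _ => Submodule.smul_mem V _ (hwV j))
  have huv : ⟪u, v⟫ = 0 := by
    rw [hu, sum_inner]
    refine Finset.sum_eq_zero fun j _ => ?_
    rw [real_inner_smul_left, heV j v hvV, mul_zero]
  -- norm of u
  have hunorm : ⟪u, u⟫ = c * ∑ i, ξ i ^ 2 := by
    rw [hu, sum_inner, Finset.mul_sum]
    refine Finset.sum_congr rfl fun i _ => ?_
    rw [inner_sum]
    rw [Finset.sum_eq_single i]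
    · rw [real_inner_smul_left, real_inner_smul_right, real_inner_self_eq_norm_sq, hnorm]
      ring
    · intro j _ hj
      rw [real_inner_smul_left, real_inner_smul_right, horth i j (Ne.symm hj)]
      ring
    · intro h; exact absurd (Finset.mem_univ i) h
  have hφnorm : c * ∑ i, ξ i ^ 2 ≤ ‖φ‖ ^ 2 := by
    have : ‖φ‖ ^ 2 = ⟪u, u⟫ + 2 * ⟪u, v⟫ + ⟪v, v⟫ := by
      rw [hφ, ← real_inner_self_eq_norm_sq]
      rw [inner_add_add_self, real_inner_comm v u]
      ring
    rw [this, huv, hunorm]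
    have : (0:ℝ) ≤ ⟪v, v⟫ := real_inner_self_nonneg
    linarith
  -- main expansion
  have hexp : ∑ i, ∑ j, M0 i j * ξ i * ξ j = (1 / c) * ⟪M φ, φ⟫ := by
    have hMφ : M φ = ∑ j, ξ j • M (e j + w j) := by
      rw [hφ, hu, hv, ← Finset.sum_add_distrib]
      rw [map_sum]
      refine Finset.sum_congr rfl fun j _ => ?_
      rw [← smul_add, map_smul]
    have hφ' : φ = ∑ i, ξ i • (e i + w i) := by
      rw [hφ, hu, hv, ← Finset.sum_add_distrib]
      exact Finset.sum_congr rfl fun i _ => (smul_add _ _ _).symm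
    rw [hMφ, hφ', sum_inner, Finset.mul_sum]
    rw [Finset.sum_comm]
    refine Finset.sum_congr rfl fun i _ => ?_
    rw [inner_sum, Finset.mul_sum]
    refine Finset.sum_congr rfl fun j _ => ?_
    rw [hM0 j i, real_inner_smul_left, real_inner_smul_right, real_inner_comm]
    ring
  rw [hexp, one_div, inv_mul_eq_div, le_div_iff₀ hc]
  have h2 : α * (c * ∑ i, ξ i ^ 2) ≤ ⟪M φ, φ⟫ :=
    le_trans (mul_le_mul_of_nonneg_left hφnorm hα.le) (hMl φ)
  linarith
end

section
/- Let W be a real Hilbert space, 0 < α ≤ C_M, C_R > 0, M : W →L[ℝ] W self-adjoint with α‖φ‖² ≤ ⟪M φ, φ⟫ ≤ C_M‖φ‖² for all φ, R : W →L[ℝ] W with ‖R‖ ≤ C_R, and V ⊆ W a closed subspace. Let e_i, e_j ∈ W and let w_i, w_j ∈ V be the correctors satisfying ⟪M(e_k + w_k), v⟫ = 0 for all v ∈ V (k ∈ {i, j}). Then |⟪R(e_j + w_j), e_i + w_i⟫| ≤ 4 (C_R C_M / α) ‖e_j‖ ‖e_i‖. -/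
open RealInnerProductSpace

theorem effective_damping_entry_bound
    {W : Type*} [NormedAddCommGroup W] [InnerProductSpace ℝ W] [CompleteSpace W]
    (α C_M C_R : ℝ) (hα : 0 < α) (hαC : α ≤ C_M) (hCR : 0 < C_R)
    (M : W →L[ℝ] W) (hMsa : ∀ φ ψ : W, ⟪M φ, ψ⟫ = ⟪φ, M ψ⟫)
    (hMl : ∀ φ : W, α * ‖φ‖ ^ 2 ≤ ⟪M φ, φ⟫)
    (hMu : ∀ φ : W, ⟪M φ, φ⟫ ≤ C_M * ‖φ‖ ^ 2)
    (R : W →L[ℝ] W) (hR : ‖R‖ ≤ C_R)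
    (V : Submodule ℝ W) (hV : IsClosed (V : Set W))
    (e_i e_j w_i w_j : W) (hwiV : w_i ∈ V) (hwjV : w_j ∈ V)
    (hwi : ∀ v ∈ V, ⟪M (e_i + w_i), v⟫ = 0)
    (hwj : ∀ v ∈ V, ⟪M (e_j + w_j), v⟫ = 0) :
    |⟪R (e_j + w_j), e_i + w_i⟫| ≤ 4 * (C_R * C_M / α) * ‖e_j‖ * ‖e_i‖ := by
  have key : ∀ e w : W, w ∈ V → (∀ v ∈ V, ⟪M (e + w), v⟫ = 0) →
      α * ‖e + w‖ ^ 2 ≤ C_M * ‖e‖ ^ 2 := by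
    intro e w hwV hw
    set x := e + w with hx
    have hxw : ⟪M x, w⟫ = 0 := hw w hwV
    have hb : ⟪M x, x⟫ = ⟪M x, e⟫ := by
      rw [hx, inner_add_right, hxw, add_zero]
    have hsym : ⟪M x, e⟫ = ⟪M e, x⟫ := by
      rw [hMsa x e, real_inner_comm]
    have hpos : 0 ≤ ⟪M (x - e), x - e⟫ := by
      have := hMl (x - e)
      nlinarith [sq_nonneg ‖x - e‖]
    have hexp : ⟪M (x - e), x - e⟫ =
        ⟪M x, x⟫ - ⟪M x, e⟫ - ⟪M e, x⟫ + ⟪M e, e⟫ := by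
      rw [map_sub, inner_sub_left, inner_sub_right, inner_sub_right]; ring
    have hle : ⟪M x, x⟫ ≤ ⟪M e, e⟫ := by
      rw [hexp] at hpos; nlinarith [hb, hsym]
    calc α * ‖x‖ ^ 2 ≤ ⟪M x, x⟫ := hMl x
      _ ≤ ⟪M e, e⟫ := hle
      _ ≤ C_M * ‖e‖ ^ 2 := hMu e
  have hi := key e_i w_i hwiV hwi
  have hj := key e_j w_j hwjV hwj
  have hCS : |⟪R (e_j + w_j), e_i + w_i⟫| ≤ C_R * ‖e_j + w_j‖ * ‖e_i + w_i‖ := by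
    calc |⟪R (e_j + w_j), e_i + w_i⟫| ≤ ‖R (e_j + w_j)‖ * ‖e_i + w_i‖ :=
          abs_real_inner_le_norm _ _
      _ ≤ (C_R * ‖e_j + w_j‖) * ‖e_i + w_i‖ := by
          gcongr
          exact (R.le_opNorm _).trans (by gcongr)
      _ = C_R * ‖e_j + w_j‖ * ‖e_i + w_i‖ := by ring
  refine hCS.trans ?_
  have h1 : (0:ℝ) ≤ ‖e_i + w_i‖ := norm_nonneg _
  have h2 : (0:ℝ) ≤ ‖e_j + w_j‖ := norm_nonneg _
  have h3 : (0:ℝ) ≤ ‖e_i‖ := norm_nonneg _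
  have h4 : (0:ℝ) ≤ ‖e_j‖ := norm_nonneg _
  have hCM : 0 < C_M := lt_of_lt_of_le hα hαC
  have hp : α * (‖e_j + w_j‖ * ‖e_i + w_i‖) ≤ C_M * (‖e_j‖ * ‖e_i‖) := by
    have hsq := mul_le_mul hj hi (by positivity) (by nlinarith)
    have h5 : 0 ≤ α * (‖e_j + w_j‖ * ‖e_i + w_i‖) := by positivity
    have h6 : 0 ≤ C_M * (‖e_j‖ * ‖e_i‖) := by positivity
    nlinarith [sq_nonneg (α * (‖e_j + w_j‖ * ‖e_i + w_i‖) + C_M * (‖e_j‖ * ‖e_i‖))]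
  have hp2 : ‖e_j + w_j‖ * ‖e_i + w_i‖ ≤ C_M / α * (‖e_j‖ * ‖e_i‖) := by
    rw [div_mul_eq_mul_div, le_div_iff₀ hα]; linarith
  have h7 := mul_le_mul_of_nonneg_left hp2 hCR.le
  have h8 : 0 ≤ C_R * (C_M / α * (‖e_j‖ * ‖e_i‖)) := by positivity
  calc C_R * ‖e_j + w_j‖ * ‖e_i + w_i‖ = C_R * (‖e_j + w_j‖ * ‖e_i + w_i‖) := by ring
    _ ≤ C_R * (C_M / α * (‖e_j‖ * ‖e_i‖)) := h7
    _ = 1 * (C_R * C_M / α) * ‖e_j‖ * ‖e_i‖ := by ring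
    _ ≤ 4 * (C_R * C_M / α) * ‖e_j‖ * ‖e_i‖ := by
        have h9 : 0 ≤ C_R * C_M / α * ‖e_j‖ * ‖e_i‖ := by positivity
        linarith
end

section
/- Let W be a real Hilbert space, 0 < α ≤ C_M, C_R > 0, M : W →L[ℝ] W self-adjoint with α‖φ‖² ≤ ⟪M φ, φ⟫ ≤ C_M‖φ‖², R : W →L[ℝ] W with ‖R‖ ≤ C_R and ⟪R φ, φ⟫ ≥ 0 for all φ ∈ W, and V ⊆ W a closed subspace. Let e_i, e_j ∈ W, let w_i, w_j ∈ V satisfy ⟪M(e_k + w_k), v⟫ = 0 for all v ∈ V (k ∈ {i, j}), and let g_j ∈ V satisfy ⟪M g_j + R(e_j + w_j), v⟫ = 0 for all v ∈ V. Let S : V →L[ℝ] V be a continuous linear operator satisfying ⟪M(S φ), ψ⟫ = ⟪R φ, ψ⟫ for all φ, ψ ∈ V. Then for every t ≥ 0: |⟪R(exp(-t S) g_j), e_i + w_i⟫| ≤ 4 (C_R / α)² C_M ‖e_j‖ ‖e_i‖. -/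
/-!
Along `u(s) = exp (-s S) g_j` the `M`-energy satisfies `d/ds ⟪M u, u⟫ = -2 ⟪R u, u⟫ ≤ 0`, so it
never exceeds the energy of `g_j`; testing the equation of `g_j` with `g_j` itself bounds that
energy by `α (C_R / α ‖e_j + w_j‖)²`, hence `‖u(t)‖ ≤ C_R / α ‖e_j + w_j‖`. A cell corrector
`e + w` minimises the `M`-energy on `e + V`, so `α ‖e + w‖² ≤ C_M ‖e‖²`. Then
`|⟪R u(t), e_i + w_i⟫| ≤ C_R ‖u(t)‖ ‖e_i + w_i‖` gives the bound, even without the factor `4`.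
-/

open RealInnerProductSpace NormedSpace

section Exponential

variable {X : Type*} [NormedAddCommGroup X] [NormedSpace ℝ X] [CompleteSpace X]

theorem exp_smul_apply_eq_tsum (A : X →L[ℝ] X) (c : ℝ) (g : X) :
    exp (c • A) g = ∑' n : ℕ, ((c ^ n / n.factorial : ℝ) • (A ^ n) g) := by
  rw [exp_eq_tsum ℝ, ← ContinuousLinearMap.apply_apply g,
    (ContinuousLinearMap.apply ℝ X g).map_tsum (expSeries_summable' _)]
  refine tsum_congr fun n => ?_
  simp [smul_pow, smul_smul, div_eq_inv_mul]

theorem hasDerivAt_exp_smul_apply (A : X →L[ℝ] X) (g : X) (s : ℝ) :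
    HasDerivAt (fun s : ℝ => exp (s • A) g) (A (exp (s • A) g)) s := by
  simpa using (hasDerivAt_exp_smul_const' A s).clm_apply (hasDerivAt_const s g)

theorem bilin_exp_smul_neg_apply_self_le (B : X →L[ℝ] X →L[ℝ] ℝ) (S : X →L[ℝ] X)
    (hS : ∀ x, 0 ≤ B (S x) x + B x (S x)) (g : X) {t : ℝ} (ht : 0 ≤ t) :
    B (exp (t • -S) g) (exp (t • -S) g) ≤ B g g := by
  set u : ℝ → X := fun s => exp (s • -S) g
  have hu : ∀ s, HasDerivAt u (-S (u s)) s := hasDerivAt_exp_smul_apply (-S) g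
  have henergy : ∀ s, HasDerivAt (fun s => B (u s) (u s))
      (-(B (S (u s)) (u s) + B (u s) (S (u s)))) s := fun s => by
    refine ((B.hasFDerivAt.comp_hasDerivAt s (hu s)).clm_apply (hu s)).congr_deriv ?_
    simp only [map_neg, neg_apply, neg_add, Function.comp_apply]
  have hanti := antitone_of_hasDerivAt_nonpos henergy fun s => neg_nonpos.2 (hS (u s))
  simpa [u] using hanti ht

end Exponential

section EnergyEstimates

variable {W : Type*} [NormedAddCommGroup W] [InnerProductSpace ℝ W] {M : W →L[ℝ] W} {α : ℝ}

theorem abs_inner_apply_le_of_opNorm_le {R : W →L[ℝ] W} {C : ℝ} (hR : ‖R‖ ≤ C) (x y : W) :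
    |⟪R x, y⟫| ≤ C * ‖x‖ * ‖y‖ :=
  (abs_real_inner_le_norm _ _).trans <| by
    gcongr
    exact R.le_of_opNorm_le hR x

theorem inner_apply_add_self_le_of_inner_eq_zero
    (hMsa : ∀ φ ψ : W, ⟪M φ, ψ⟫ = ⟪φ, M ψ⟫) (hMpos : ∀ φ : W, 0 ≤ ⟪M φ, φ⟫) {e w : W}
    (h : ⟪M (e + w), w⟫ = 0) : ⟪M (e + w), e + w⟫ ≤ ⟪M e, e⟫ := by
  have hsymm : ⟪M w, e + w⟫ = 0 := by rw [hMsa, real_inner_comm, h]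
  have hx : ⟪M (e + w), e + w⟫ = ⟪M e, e⟫ + ⟪M w, e⟫ := by
    rw [inner_add_right, h, add_zero, map_add, inner_add_left]
  have hw : ⟪M w, e⟫ + ⟪M w, w⟫ = 0 := by rw [← inner_add_right, hsymm]
  linarith [hMpos w]

theorem norm_le_of_inner_apply_self_le (hα : 0 < α) (hMl : ∀ φ : W, α * ‖φ‖ ^ 2 ≤ ⟪M φ, φ⟫)
    {φ : W} {K : ℝ} (hK : 0 ≤ K) (h : ⟪M φ, φ⟫ ≤ α * K ^ 2) : ‖φ‖ ≤ K :=
  (pow_le_pow_iff_left₀ (norm_nonneg φ) hK two_ne_zero).1 <|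
    le_of_mul_le_mul_left ((hMl φ).trans h) hα

theorem inner_apply_self_le_of_inner_add_eq_zero (hα : 0 < α)
    (hMl : ∀ φ : W, α * ‖φ‖ ^ 2 ≤ ⟪M φ, φ⟫) {R : W →L[ℝ] W} {C : ℝ} (hR : ‖R‖ ≤ C)
    {g x : W} (hg : ⟪M g + R x, g⟫ = 0) : ⟪M g, g⟫ ≤ α * (C / α * ‖x‖) ^ 2 := by
  have hC : 0 ≤ C := (norm_nonneg R).trans hR
  have henergy : ⟪M g, g⟫ ≤ C * ‖x‖ * ‖g‖ := by
    rw [inner_add_left] at hg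
    linarith [neg_abs_le ⟪R x, g⟫, abs_inner_apply_le_of_opNorm_le hR x g]
  have hg_norm : ‖g‖ ≤ C / α * ‖x‖ := by
    rw [div_mul_eq_mul_div, le_div_iff₀ hα]
    rcases (norm_nonneg g).eq_or_lt with hg_zero | hg_pos
    · rw [← hg_zero, zero_mul]
      positivity
    · refine le_of_mul_le_mul_right ?_ hg_pos
      linarith [hMl g]
  calc ⟪M g, g⟫ ≤ C * ‖x‖ * ‖g‖ := henergy
    _ ≤ C * ‖x‖ * (C / α * ‖x‖) := by gcongr
    _ = α * (C / α * ‖x‖) ^ 2 := by field_simp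

theorem norm_add_le_sqrt_mul_norm_of_inner_eq_zero (hα : 0 < α) {C_M : ℝ} (hCM : 0 ≤ C_M)
    (hMsa : ∀ φ ψ : W, ⟪M φ, ψ⟫ = ⟪φ, M ψ⟫) (hMl : ∀ φ : W, α * ‖φ‖ ^ 2 ≤ ⟪M φ, φ⟫)
    (hMu : ∀ φ : W, ⟪M φ, φ⟫ ≤ C_M * ‖φ‖ ^ 2) {e w : W} (h : ⟪M (e + w), w⟫ = 0) :
    ‖e + w‖ ≤ √(C_M / α) * ‖e‖ := by
  have hMpos : ∀ φ : W, 0 ≤ ⟪M φ, φ⟫ := fun φ => (by positivity : 0 ≤ α * ‖φ‖ ^ 2).trans (hMl φ)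
  refine norm_le_of_inner_apply_self_le hα hMl (by positivity) ?_
  calc ⟪M (e + w), e + w⟫ ≤ ⟪M e, e⟫ := inner_apply_add_self_le_of_inner_eq_zero hMsa hMpos h
    _ ≤ C_M * ‖e‖ ^ 2 := hMu e
    _ = α * (√(C_M / α) * ‖e‖) ^ 2 := by
      rw [mul_pow, Real.sq_sqrt (by positivity)]
      field_simp

theorem inner_apply_exp_series_self_le (hMsa : ∀ φ ψ : W, ⟪M φ, ψ⟫ = ⟪φ, M ψ⟫)
    {V : Submodule ℝ W} [CompleteSpace V] {S : V →L[ℝ] V} (hS : ∀ φ : V, 0 ≤ ⟪M (S φ : W), φ⟫)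
    (g : V) {t : ℝ} (ht : 0 ≤ t) :
    ⟪M (∑' n : ℕ, (((-t) ^ n / n.factorial : ℝ) • ((S ^ n) g)) : V),
      (∑' n : ℕ, (((-t) ^ n / n.factorial : ℝ) • ((S ^ n) g)) : V)⟫ ≤ ⟪M g, g⟫ := by
  let B : V →L[ℝ] V →L[ℝ] ℝ := (innerSL ℝ ∘L M).bilinearComp V.subtypeL V.subtypeL
  have hBS : ∀ φ, 0 ≤ B (S φ) φ + B φ (S φ) := fun φ => by
    have hright : B φ (S φ) = B (S φ) φ := by
      rw [show B (S φ) φ = ⟪M (S φ : W), φ⟫ from rfl, real_inner_comm, ← hMsa]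
      rfl
    rw [hright]
    exact add_nonneg (hS φ) (hS φ)
  have := bilin_exp_smul_neg_apply_self_le B S hBS g ht
  rwa [smul_neg, ← neg_smul, exp_smul_apply_eq_tsum] at this

end EnergyEstimates

theorem effective_convolution_kernel_entry_bound_general
    {W : Type*} [NormedAddCommGroup W] [InnerProductSpace ℝ W] [CompleteSpace W]
    (α C_M C_R : ℝ) (hα : 0 < α) (hαC : α ≤ C_M)
    (M : W →L[ℝ] W) (hMsa : ∀ φ ψ : W, ⟪M φ, ψ⟫ = ⟪φ, M ψ⟫)
    (hMl : ∀ φ : W, α * ‖φ‖ ^ 2 ≤ ⟪M φ, φ⟫)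
    (hMu : ∀ φ : W, ⟪M φ, φ⟫ ≤ C_M * ‖φ‖ ^ 2)
    (R : W →L[ℝ] W) (hR : ‖R‖ ≤ C_R) (hRpos : ∀ φ : W, 0 ≤ ⟪R φ, φ⟫)
    (V : Submodule ℝ W) (hV : IsClosed (V : Set W))
    (e_i e_j w_i w_j : W) (hwiV : w_i ∈ V) (hwjV : w_j ∈ V)
    (hwi : ∀ v ∈ V, ⟪M (e_i + w_i), v⟫ = 0)
    (hwj : ∀ v ∈ V, ⟪M (e_j + w_j), v⟫ = 0)
    (g_j : V) (hg : ∀ v ∈ V, ⟪M (g_j : W) + R (e_j + w_j), v⟫ = 0)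
    (S : V →L[ℝ] V)
    (hS : ∀ φ ψ : V, ⟪M (S φ : W), (ψ : W)⟫ = ⟪R (φ : W), (ψ : W)⟫)
    (t : ℝ) (ht : 0 ≤ t) :
    |⟪R (((∑' n : ℕ, (((-t) ^ n / n.factorial : ℝ) • ((S ^ n) g_j)) : V) : W)),
        e_i + w_i⟫| ≤ 4 * (C_R / α) ^ 2 * C_M * ‖e_j‖ * ‖e_i‖ := by
  have : CompleteSpace V := hV.completeSpace_coe
  have hCR : 0 ≤ C_R := (norm_nonneg R).trans hR
  have hCM : 0 ≤ C_M := hα.le.trans hαC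
  set z : V := ∑' n : ℕ, (((-t) ^ n / n.factorial : ℝ) • ((S ^ n) g_j))
  have hdecay : ⟪M z, z⟫ ≤ ⟪M g_j, g_j⟫ :=
    inner_apply_exp_series_self_le hMsa (fun φ => hS φ φ ▸ hRpos φ) g_j ht
  have hz : ‖(z : W)‖ ≤ C_R / α * ‖e_j + w_j‖ :=
    norm_le_of_inner_apply_self_le hα hMl (by positivity) <| hdecay.trans <|
      inner_apply_self_le_of_inner_add_eq_zero hα hMl hR (hg g_j g_j.2)
  have hcorr {e w : W} (hw : w ∈ V) (h : ∀ v ∈ V, ⟪M (e + w), v⟫ = 0) :=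
    norm_add_le_sqrt_mul_norm_of_inner_eq_zero hα hCM hMsa hMl hMu (h w hw)
  calc |⟪R z, e_i + w_i⟫| ≤ C_R * ‖(z : W)‖ * ‖e_i + w_i‖ := abs_inner_apply_le_of_opNorm_le hR _ _
    _ ≤ C_R * (C_R / α * (√(C_M / α) * ‖e_j‖)) * (√(C_M / α) * ‖e_i‖) := by
      gcongr
      exacts [hz.trans (by gcongr; exact hcorr hwjV hwj), hcorr hwiV hwi]
    _ = (C_R / α) ^ 2 * C_M * ‖e_j‖ * ‖e_i‖ := by
      linear_combination C_R * (C_R / α) * ‖e_j‖ * ‖e_i‖ * Real.mul_self_sqrt (div_nonneg hCM hα.le)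
    _ ≤ 4 * (C_R / α) ^ 2 * C_M * ‖e_j‖ * ‖e_i‖ := by
      have : 0 ≤ (C_R / α) ^ 2 * C_M * ‖e_j‖ * ‖e_i‖ := by positivity
      linarith

/-- The entry bound `|G⁰(t)_{i,j}| ≤ 4 (C_R/α)² C_M ‖e_j‖‖e_i‖` for the effective
convolution kernel.  Here `∑' n, ((-t)ⁿ/n!) • (Sⁿ g_j)` is the power-series
exponential `exp (-t S)` of the bounded operator `S` applied to `g_j`. -/
theorem effective_convolution_kernel_entry_bound
    {W : Type*} [NormedAddCommGroup W] [InnerProductSpace ℝ W] [CompleteSpace W]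
    (α C_M C_R : ℝ) (hα : 0 < α) (hαC : α ≤ C_M) (hCR : 0 < C_R)
    (M : W →L[ℝ] W) (hMsa : ∀ φ ψ : W, ⟪M φ, ψ⟫ = ⟪φ, M ψ⟫)
    (hMl : ∀ φ : W, α * ‖φ‖ ^ 2 ≤ ⟪M φ, φ⟫)
    (hMu : ∀ φ : W, ⟪M φ, φ⟫ ≤ C_M * ‖φ‖ ^ 2)
    (R : W →L[ℝ] W) (hR : ‖R‖ ≤ C_R) (hRpos : ∀ φ : W, 0 ≤ ⟪R φ, φ⟫)
    (V : Submodule ℝ W) (hV : IsClosed (V : Set W))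
    (e_i e_j w_i w_j : W) (hwiV : w_i ∈ V) (hwjV : w_j ∈ V)
    (hwi : ∀ v ∈ V, ⟪M (e_i + w_i), v⟫ = 0)
    (hwj : ∀ v ∈ V, ⟪M (e_j + w_j), v⟫ = 0)
    (g_j : V) (hg : ∀ v ∈ V, ⟪M (g_j : W) + R (e_j + w_j), v⟫ = 0)
    (S : V →L[ℝ] V)
    (hS : ∀ φ ψ : V, ⟪M (S φ : W), (ψ : W)⟫ = ⟪R (φ : W), (ψ : W)⟫)
    (t : ℝ) (ht : 0 ≤ t) :
    |⟪R (((∑' n : ℕ, (((-t) ^ n / n.factorial : ℝ) • ((S ^ n) g_j)) : V) : W)),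
        e_i + w_i⟫| ≤ 4 * (C_R / α) ^ 2 * C_M * ‖e_j‖ * ‖e_i‖ :=
  effective_convolution_kernel_entry_bound_general α C_M C_R hα hαC M hMsa hMl hMu R hR hRpos V hV
    e_i e_j w_i w_j hwiV hwjV hwi hwj g_j hg S hS t ht
end

section
/- Let W be a real Hilbert space, 0 < α ≤ C_M, C_R > 0, M : W →L[ℝ] W self-adjoint with α‖φ‖² ≤ ⟪M φ, φ⟫ ≤ C_M‖φ‖², R : W →L[ℝ] W with ‖R‖ ≤ C_R and ⟪R φ, φ⟫ ≥ 0 for all φ ∈ W, and V ⊆ W a closed subspace. Let e_i, e_j ∈ W, let w_i ∈ V satisfy ⟪M(e_i + w_i), v⟫ = 0 for all v ∈ V, and let n_j ∈ V satisfy ⟪M(e_j - n_j), v⟫ = 0 for all v ∈ V. Let S : V →L[ℝ] V satisfy ⟪M(S φ), ψ⟫ = ⟪R φ, ψ⟫ for all φ, ψ ∈ V. Then for every t ≥ 0: |⟪R(exp(-t S) n_j), e_i + w_i⟫| ≤ 2 (C_R C_M / α) ‖e_j‖ ‖e_i‖. -/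
/-!
Testing the cell problem and the initial condition against `w_i` and `n_j` gives `M`-orthogonal
splittings `e_i = -w_i + (e_i + w_i)` and `e_j = n_j + (e_j - n_j)`, so the `M`-energies of `w_i`
and `n_j` are at most those of `e_i` and `e_j`. Along `u(t) = exp(-tS) n_j` the energy
`⟪M u, u⟫` has derivative `-2⟪R u, u⟫ ≤ 0`, so it stays below its initial value. Coercivity turns
the energy bounds into `‖u(t)‖ ≤ √(C_M/α) ‖e_j‖` and `‖w_i‖ ≤ √(C_M/α) ‖e_i‖`, and
Cauchy–Schwarz with `‖R‖ ≤ C_R` gives the bound.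
-/

open RealInnerProductSpace NormedSpace

section

variable {W : Type*} [NormedAddCommGroup W] [InnerProductSpace ℝ W]
variable {E : Type*} [NormedAddCommGroup E] [NormedSpace ℝ E] [CompleteSpace E]

lemma inner_map_self_le_of_inner_map_sub_eq_zero (M : W →L[ℝ] W)
    (hMsa : ∀ φ ψ : W, ⟪M φ, ψ⟫ = ⟪φ, M ψ⟫) (hMpos : ∀ φ : W, 0 ≤ ⟪M φ, φ⟫) {e n : W}
    (h : ⟪M (e - n), n⟫ = 0) : ⟪M n, n⟫ ≤ ⟪M e, e⟫ := by
  have hsplit : ⟪M e, e⟫ = ⟪M n, n⟫ + 2 * ⟪M (e - n), n⟫ + ⟪M (e - n), e - n⟫ := by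
    have hsymm : ⟪M n, e - n⟫ = ⟪M (e - n), n⟫ := by rw [hMsa, real_inner_comm]
    conv_lhs => rw [← sub_add_cancel e n]
    simp only [map_add, inner_add_left, inner_add_right, hsymm]
    ring
  linarith [hMpos (e - n)]

lemma norm_le_sqrt_mul_of_inner_map_self_le {α C_M : ℝ} (hα : 0 < α) (M : W →L[ℝ] W)
    (hMl : ∀ φ : W, α * ‖φ‖ ^ 2 ≤ ⟪M φ, φ⟫) (hMu : ∀ φ : W, ⟪M φ, φ⟫ ≤ C_M * ‖φ‖ ^ 2)
    {φ e : W} (h : ⟪M φ, φ⟫ ≤ ⟪M e, e⟫) : ‖φ‖ ≤ √(C_M / α) * ‖e‖ := by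
  have hsq : ‖φ‖ ^ 2 ≤ C_M / α * ‖e‖ ^ 2 := by
    rw [div_mul_eq_mul_div, le_div_iff₀ hα]
    linarith [hMl φ, hMu e]
  calc ‖φ‖ = √(‖φ‖ ^ 2) := (Real.sqrt_sq (norm_nonneg φ)).symm
    _ ≤ √(C_M / α * ‖e‖ ^ 2) := Real.sqrt_le_sqrt hsq
    _ = √(C_M / α) * ‖e‖ := by rw [Real.sqrt_mul' _ (sq_nonneg _), Real.sqrt_sq (norm_nonneg e)]

lemma tsum_smul_pow_apply_eq_exp (S : E →L[ℝ] E) (t : ℝ) (x : E) :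
    ∑' n : ℕ, ((t ^ n / n.factorial : ℝ) • (S ^ n) x) = exp (t • S) x := by
  refine (((exp_series_hasSum_exp' (𝕂 := ℝ) (t • S)).mapL
    (ContinuousLinearMap.apply ℝ E x)).tsum_eq.symm.trans (tsum_congr fun n => ?_)).symm
  simp [smul_pow, smul_smul, div_eq_inv_mul]

lemma hasDerivAt_exp_neg_smul_apply (S : E →L[ℝ] E) (x : E) (t : ℝ) :
    HasDerivAt (fun s : ℝ => exp ((-s) • S) x) (-S (exp ((-t) • S) x)) t := by
  simp only [neg_smul, ← smul_neg]
  simpa using ((hasDerivAt_exp_smul_const' (𝕂 := ℝ) (-S) t).clm_apply (hasDerivAt_const t x))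

lemma antitone_inner_map_exp_neg_smul (ι : E →L[ℝ] W) (M : W →L[ℝ] W)
    (hMsa : ∀ φ ψ : W, ⟪M φ, ψ⟫ = ⟪φ, M ψ⟫)
    (S : E →L[ℝ] E) (hS : ∀ φ : E, 0 ≤ ⟪M (ι (S φ)), ι φ⟫) (x : E) :
    Antitone fun t : ℝ => ⟪M (ι (exp ((-t) • S) x)), ι (exp ((-t) • S) x)⟫ := by
  set u : ℝ → E := fun t => exp ((-t) • S) x
  have hu : ∀ t, HasDerivAt (fun s => ι (u s)) (-ι (S (u t))) t := fun t =>
    (ι.hasFDerivAt.comp_hasDerivAt t (hasDerivAt_exp_neg_smul_apply S x t)).congr_deriv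
      (map_neg ι _)
  have henergy : ∀ t, HasDerivAt (fun s => ⟪M (ι (u s)), ι (u s)⟫)
      (-(2 * ⟪M (ι (S (u t))), ι (u t)⟫)) t := by
    intro t
    refine ((M.hasFDerivAt.comp_hasDerivAt t (hu t)).inner ℝ (hu t)).congr_deriv ?_
    have hsymm : ⟪M (ι (u t)), ι (S (u t))⟫ = ⟪M (ι (S (u t))), ι (u t)⟫ := by
      rw [hMsa, real_inner_comm]
    simp only [Function.comp_apply, map_neg, inner_neg_left, inner_neg_right, hsymm]
    ring
  refine antitone_of_deriv_nonpos (fun t => (henergy t).differentiableAt) fun t => ?_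
  rw [(henergy t).deriv]
  linarith [hS (u t)]

lemma inner_map_tsum_exp_series_le (ι : E →L[ℝ] W) (M : W →L[ℝ] W)
    (hMsa : ∀ φ ψ : W, ⟪M φ, ψ⟫ = ⟪φ, M ψ⟫)
    (S : E →L[ℝ] E) (hS : ∀ φ : E, 0 ≤ ⟪M (ι (S φ)), ι φ⟫) (x : E) {t : ℝ} (ht : 0 ≤ t) :
    ⟪M (ι (∑' n : ℕ, (((-t) ^ n / n.factorial : ℝ) • (S ^ n) x))),
      ι (∑' n : ℕ, (((-t) ^ n / n.factorial : ℝ) • (S ^ n) x))⟫ ≤ ⟪M (ι x), ι x⟫ := by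
  rw [tsum_smul_pow_apply_eq_exp]
  simpa using antitone_inner_map_exp_neg_smul ι M hMsa S hS x ht

lemma abs_inner_apply_add_le_of_norm_le {R : W →L[ℝ] W} {C c a : ℝ} (hR : ‖R‖ ≤ C) (hc : 1 ≤ c)
    {y e w : W} (hy : ‖y‖ ≤ c * a) (hw : ‖w‖ ≤ c * ‖e‖) :
    |⟪R y, e + w⟫| ≤ 2 * (C * c ^ 2) * a * ‖e‖ := by
  have hC : 0 ≤ C := (norm_nonneg R).trans hR
  calc |⟪R y, e + w⟫| ≤ ‖R y‖ * ‖e + w‖ := abs_real_inner_le_norm _ _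
    _ ≤ C * ‖y‖ * (‖e‖ + ‖w‖) := by
      gcongr
      · exact R.le_of_opNorm_le hR y
      · exact norm_add_le e w
    _ ≤ C * (c * a) * (c * ‖e‖ + c * ‖e‖) := by
      have hca : 0 ≤ c * a := (norm_nonneg y).trans hy
      gcongr
      exact le_mul_of_one_le_left (norm_nonneg e) hc
    _ = 2 * (C * c ^ 2) * a * ‖e‖ := by ring

end

theorem effective_extra_source_entry_bound_general
    {W : Type*} [NormedAddCommGroup W] [InnerProductSpace ℝ W] [CompleteSpace W]
    (α C_M C_R : ℝ) (hα : 0 < α) (hαC : α ≤ C_M)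
    (M : W →L[ℝ] W) (hMsa : ∀ φ ψ : W, ⟪M φ, ψ⟫ = ⟪φ, M ψ⟫)
    (hMl : ∀ φ : W, α * ‖φ‖ ^ 2 ≤ ⟪M φ, φ⟫)
    (hMu : ∀ φ : W, ⟪M φ, φ⟫ ≤ C_M * ‖φ‖ ^ 2)
    (R : W →L[ℝ] W) (hR : ‖R‖ ≤ C_R) (hRpos : ∀ φ : W, 0 ≤ ⟪R φ, φ⟫)
    (V : Submodule ℝ W) (hV : IsClosed (V : Set W))
    (e_i e_j w_i : W) (hwiV : w_i ∈ V)
    (hwi : ∀ v ∈ V, ⟪M (e_i + w_i), v⟫ = 0)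
    (n_j : V) (hn : ∀ v ∈ V, ⟪M (e_j - (n_j : W)), v⟫ = 0)
    (S : V →L[ℝ] V)
    (hS : ∀ φ ψ : V, ⟪M (S φ : W), (ψ : W)⟫ = ⟪R (φ : W), (ψ : W)⟫)
    (t : ℝ) (ht : 0 ≤ t) :
    |⟪R (((∑' n : ℕ, (((-t) ^ n / n.factorial : ℝ) • ((S ^ n) n_j)) : V) : W)),
        e_i + w_i⟫| ≤ 2 * (C_R * C_M / α) * ‖e_j‖ * ‖e_i‖ := by
  have : CompleteSpace V := hV.completeSpace_coe
  have hMpos : ∀ φ, 0 ≤ ⟪M φ, φ⟫ := fun φ => (by positivity : 0 ≤ α * ‖φ‖ ^ 2).trans (hMl φ)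
  have hdecay := inner_map_tsum_exp_series_le V.subtypeL M hMsa S
    (fun φ => (hS φ φ).symm ▸ hRpos φ) n_j ht
  have hnj := inner_map_self_le_of_inner_map_sub_eq_zero M hMsa hMpos (hn n_j n_j.2)
  have hwij : ⟪M (-w_i), -w_i⟫ ≤ ⟪M e_i, e_i⟫ :=
    inner_map_self_le_of_inner_map_sub_eq_zero M hMsa hMpos
      (by rw [sub_neg_eq_add, inner_neg_right, hwi w_i hwiV, neg_zero])
  have hk : 1 ≤ C_M / α := (one_le_div hα).mpr hαC
  have h := abs_inner_apply_add_le_of_norm_le hR (Real.one_le_sqrt.mpr hk)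
    (norm_le_sqrt_mul_of_inner_map_self_le hα M hMl hMu (hdecay.trans hnj))
    ((norm_neg w_i).symm.trans_le (norm_le_sqrt_mul_of_inner_map_self_le hα M hMl hMu hwij))
  rwa [Real.sq_sqrt (zero_le_one.trans hk), ← mul_div_assoc] at h

/-- The entry bound `|J⁰(t)_{i,j}| ≤ 2 C_R C_M / α · ‖e_j‖‖e_i‖` for the effective
extra source.  Here `∑' n, ((-t)ⁿ/n!) • (Sⁿ n_j)` is the power-series exponential
`exp (-t S)` of the bounded operator `S` applied to `n_j`. -/
theorem effective_extra_source_entry_bound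
    {W : Type*} [NormedAddCommGroup W] [InnerProductSpace ℝ W] [CompleteSpace W]
    (α C_M C_R : ℝ) (hα : 0 < α) (hαC : α ≤ C_M) (hCR : 0 < C_R)
    (M : W →L[ℝ] W) (hMsa : ∀ φ ψ : W, ⟪M φ, ψ⟫ = ⟪φ, M ψ⟫)
    (hMl : ∀ φ : W, α * ‖φ‖ ^ 2 ≤ ⟪M φ, φ⟫)
    (hMu : ∀ φ : W, ⟪M φ, φ⟫ ≤ C_M * ‖φ‖ ^ 2)
    (R : W →L[ℝ] W) (hR : ‖R‖ ≤ C_R) (hRpos : ∀ φ : W, 0 ≤ ⟪R φ, φ⟫)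
    (V : Submodule ℝ W) (hV : IsClosed (V : Set W))
    (e_i e_j w_i : W) (hwiV : w_i ∈ V)
    (hwi : ∀ v ∈ V, ⟪M (e_i + w_i), v⟫ = 0)
    (n_j : V) (hn : ∀ v ∈ V, ⟪M (e_j - (n_j : W)), v⟫ = 0)
    (S : V →L[ℝ] V)
    (hS : ∀ φ ψ : V, ⟪M (S φ : W), (ψ : W)⟫ = ⟪R (φ : W), (ψ : W)⟫)
    (t : ℝ) (ht : 0 ≤ t) :
    |⟪R (((∑' n : ℕ, (((-t) ^ n / n.factorial : ℝ) • ((S ^ n) n_j)) : V) : W)),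
        e_i + w_i⟫| ≤ 2 * (C_R * C_M / α) * ‖e_j‖ * ‖e_i‖ :=
  effective_extra_source_entry_bound_general α C_M C_R hα hαC M hMsa hMl hMu R hR hRpos V hV e_i e_j
    w_i hwiV hwi n_j hn S hS t ht
end

section
/- Let X be a real Hilbert space, α > 0, A : X ≃L[ℝ] X a self-adjoint continuous linear equivalence with ⟪-A φ, φ⟫ ≥ α‖φ‖² for all φ ∈ X, and B : X →L[ℝ] X a continuous linear operator. Define the bilinear form p(Φ, Ψ) := ⟪Φ, -A⁻¹ Ψ⟫. Then p is a symmetric positive definite bilinear form on X, and for all Φ, Ψ ∈ X: |p(B(A⁻¹ Φ), Ψ)| ≤ (‖B‖ / α) · √p(Φ, Φ) · √p(Ψ, Ψ). -/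
/-!
Coercivity of `-A` transfers to its inverse: `α ‖A⁻¹ Φ‖² ≤ ⟪-A (A⁻¹ Φ), A⁻¹ Φ⟫ = p(Φ, Φ)`.
Hence `p(B A⁻¹ Φ, Ψ) = -⟪B A⁻¹ Φ, A⁻¹ Ψ⟫` is bounded by `‖B‖ ‖A⁻¹ Φ‖ ‖A⁻¹ Ψ‖` (Cauchy–Schwarz),
and `α ‖A⁻¹ Φ‖ ‖A⁻¹ Ψ‖ ≤ √p(Φ, Φ) √p(Ψ, Ψ)`.
-/

open RealInnerProductSpace

theorem mul_mul_le_sqrt_mul_sqrt {α x y a b : ℝ} (hα : 0 ≤ α)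
    (hxa : α * x ^ 2 ≤ a) (hyb : α * y ^ 2 ≤ b) : α * (x * y) ≤ √a * √b := by
  have hsq : (α * (x * y)) ^ 2 ≤ a * b :=
    calc (α * (x * y)) ^ 2 = (α * x ^ 2) * (α * y ^ 2) := by ring
      _ ≤ a * b := mul_le_mul hxa hyb (by positivity) ((by positivity : 0 ≤ α * x ^ 2).trans hxa)
  rw [← Real.sqrt_mul' a ((by positivity : 0 ≤ α * y ^ 2).trans hyb)]
  exact Real.le_sqrt_of_sq_le hsq

theorem abs_inner_apply_le_opNorm_mul_mul {X : Type*} [NormedAddCommGroup X]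
    [InnerProductSpace ℝ X] (B : X →L[ℝ] X) (u v : X) : |⟪B u, v⟫| ≤ ‖B‖ * (‖u‖ * ‖v‖) :=
  calc |⟪B u, v⟫| ≤ ‖B u‖ * ‖v‖ := abs_real_inner_le_norm _ _
    _ ≤ ‖B‖ * ‖u‖ * ‖v‖ := by gcongr; exact B.le_opNorm u
    _ = ‖B‖ * (‖u‖ * ‖v‖) := mul_assoc _ _ _

namespace ContinuousLinearEquiv

variable {X : Type*} [NormedAddCommGroup X] [InnerProductSpace ℝ X] {A : X ≃L[ℝ] X}

theorem inner_symm_apply_left (hA : ∀ φ ψ : X, ⟪A φ, ψ⟫ = ⟪φ, A ψ⟫) (Φ Ψ : X) :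
    ⟪A.symm Φ, Ψ⟫ = ⟪Φ, A.symm Ψ⟫ := by
  simpa using (hA (A.symm Φ) (A.symm Ψ)).symm

theorem inner_neg_symm_comm (hA : ∀ φ ψ : X, ⟪A φ, ψ⟫ = ⟪φ, A ψ⟫) (Φ Ψ : X) :
    ⟪Φ, -(A.symm Ψ)⟫ = ⟪Ψ, -(A.symm Φ)⟫ := by
  rw [inner_neg_right, inner_neg_right, real_inner_comm, inner_symm_apply_left hA]

theorem mul_norm_symm_sq_le_inner_neg_symm {α : ℝ} (hA : ∀ φ : X, α * ‖φ‖ ^ 2 ≤ ⟪-(A φ), φ⟫)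
    (Φ : X) : α * ‖A.symm Φ‖ ^ 2 ≤ ⟪Φ, -(A.symm Φ)⟫ := by
  simpa [inner_neg_left, inner_neg_right, real_inner_comm] using hA (A.symm Φ)

theorem inner_neg_symm_self_pos {α : ℝ} (hα : 0 < α)
    (hA : ∀ φ : X, α * ‖φ‖ ^ 2 ≤ ⟪-(A φ), φ⟫) {Φ : X} (hΦ : Φ ≠ 0) :
    0 < ⟪Φ, -(A.symm Φ)⟫ := by
  have hsymm : A.symm Φ ≠ 0 := by simpa using hΦ
  exact lt_of_lt_of_le (by positivity) (mul_norm_symm_sq_le_inner_neg_symm hA Φ)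

theorem abs_inner_apply_symm_neg_symm_le {α : ℝ} (hα : 0 < α)
    (hA : ∀ φ : X, α * ‖φ‖ ^ 2 ≤ ⟪-(A φ), φ⟫) (B : X →L[ℝ] X) (Φ Ψ : X) :
    |⟪B (A.symm Φ), -(A.symm Ψ)⟫| ≤
      ‖B‖ / α * √⟪Φ, -(A.symm Φ)⟫ * √⟪Ψ, -(A.symm Ψ)⟫ := by
  have hnorms : α * (‖A.symm Φ‖ * ‖A.symm Ψ‖) ≤ √⟪Φ, -(A.symm Φ)⟫ * √⟪Ψ, -(A.symm Ψ)⟫ :=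
    mul_mul_le_sqrt_mul_sqrt hα.le
      (mul_norm_symm_sq_le_inner_neg_symm hA Φ) (mul_norm_symm_sq_le_inner_neg_symm hA Ψ)
  calc |⟪B (A.symm Φ), -(A.symm Ψ)⟫|
      ≤ ‖B‖ * (‖A.symm Φ‖ * ‖A.symm Ψ‖) := by
        rw [inner_neg_right, abs_neg]; exact abs_inner_apply_le_opNorm_mul_mul B _ _
    _ = ‖B‖ / α * (α * (‖A.symm Φ‖ * ‖A.symm Ψ‖)) := by field_simp
    _ ≤ ‖B‖ / α * √⟪Φ, -(A.symm Φ)⟫ * √⟪Ψ, -(A.symm Ψ)⟫ := by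
        rw [mul_assoc _ √_]; gcongr

end ContinuousLinearEquiv

theorem weighted_inner_product_bounded_operator_general
    {X : Type*} [NormedAddCommGroup X] [InnerProductSpace ℝ X]
    (α : ℝ) (hα : 0 < α) (A : X ≃L[ℝ] X)
    (hAsa : ∀ φ ψ : X, ⟪A φ, ψ⟫ = ⟪φ, A ψ⟫)
    (hAneg : ∀ φ : X, α * ‖φ‖ ^ 2 ≤ ⟪-(A φ), φ⟫)
    (B : X →L[ℝ] X)
    (p : X → X → ℝ) (hp : ∀ Φ Ψ : X, p Φ Ψ = ⟪Φ, -(A.symm Ψ)⟫) :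
    (∀ Φ Ψ : X, p Φ Ψ = p Ψ Φ) ∧
    (∀ Φ : X, Φ ≠ 0 → 0 < p Φ Φ) ∧
    (∀ Φ Ψ : X, |p (B (A.symm Φ)) Ψ| ≤
      (‖B‖ / α) * Real.sqrt (p Φ Φ) * Real.sqrt (p Ψ Ψ)) := by
  simp only [hp]
  exact ⟨ContinuousLinearEquiv.inner_neg_symm_comm hAsa,
    fun _ => ContinuousLinearEquiv.inner_neg_symm_self_pos hα hAneg,
    ContinuousLinearEquiv.abs_inner_apply_symm_neg_symm_le hα hAneg B⟩

theorem weighted_inner_product_bounded_operator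
    {X : Type*} [NormedAddCommGroup X] [InnerProductSpace ℝ X] [CompleteSpace X]
    (α : ℝ) (hα : 0 < α) (A : X ≃L[ℝ] X)
    (hAsa : ∀ φ ψ : X, ⟪A φ, ψ⟫ = ⟪φ, A ψ⟫)
    (hAneg : ∀ φ : X, α * ‖φ‖ ^ 2 ≤ ⟪-(A φ), φ⟫)
    (B : X →L[ℝ] X)
    (p : X → X → ℝ) (hp : ∀ Φ Ψ : X, p Φ Ψ = ⟪Φ, -(A.symm Ψ)⟫) :
    (∀ Φ Ψ : X, p Φ Ψ = p Ψ Φ) ∧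
    (∀ Φ : X, Φ ≠ 0 → 0 < p Φ Φ) ∧
    (∀ Φ Ψ : X, |p (B (A.symm Φ)) Ψ| ≤
      (‖B‖ / α) * Real.sqrt (p Φ Φ) * Real.sqrt (p Ψ Ψ)) :=
  weighted_inner_product_bounded_operator_general α hα A hAsa hAneg B p hp
end

section
/- Let X be a real Hilbert space, α > 0, A : X ≃L[ℝ] X a self-adjoint continuous linear equivalence with ⟪-A φ, φ⟫ ≥ α‖φ‖² for all φ ∈ X, and B : X →L[ℝ] X a continuous linear operator such that ⟪B(A⁻¹ Φ), -A⁻¹ Φ⟫ ≥ 0 for every Φ ∈ X. Then for every t ≥ 0 and every w₀ ∈ X: ‖A (exp(-t (A⁻¹ ∘ B)) w₀)‖ ≤ ‖A‖ · √(‖A⁻¹‖ / α) · ‖A w₀‖. -/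
/-!
The energy `⟪-A w, w⟫`, which by coercivity of `-A` dominates `α ‖w‖²`, is nonincreasing along
`w(s) = exp(-s A⁻¹B) w₀`: its derivative is `2⟪A w, A⁻¹B w⟫ = 2⟪B w, w⟫ ≤ 0` by self-adjointness
of `A` and dissipativity of `B`. Hence `α ‖w(t)‖² ≤ ⟪-A w₀, w₀⟫ ≤ ‖A⁻¹‖ ‖A w₀‖²`, and applying
`A` costs a factor `‖A‖`.
-/

open RealInnerProductSpace

theorem Real.le_sqrt_div_mul_of_mul_sq_le {a b c α : ℝ} (hα : 0 < α) (hb : 0 ≤ b)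
    (h : α * a ^ 2 ≤ c * b ^ 2) : a ≤ √(c / α) * b := by
  rw [← Real.sqrt_sq hb, ← Real.sqrt_mul' _ (sq_nonneg b)]
  refine Real.le_sqrt_of_sq_le ?_
  rw [div_mul_eq_mul_div, le_div_iff₀ hα]
  linarith

theorem ContinuousLinearEquiv.norm_le_norm_symm_mul_norm_apply {𝕜 E F : Type*}
    [NontriviallyNormedField 𝕜] [NormedAddCommGroup E] [NormedAddCommGroup F]
    [NormedSpace 𝕜 E] [NormedSpace 𝕜 F] (e : E ≃L[𝕜] F) (x : E) :
    ‖x‖ ≤ ‖(e.symm : F →L[𝕜] E)‖ * ‖e x‖ := by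
  simpa using (e.symm : F →L[𝕜] E).le_opNorm (e x)

theorem hasDerivAt_exp_neg_smul_apply_s11 {𝕂 E : Type*} [RCLike 𝕂] [NormedAddCommGroup E]
    [NormedSpace 𝕂 E] [CompleteSpace E] (L : E →L[𝕂] E) (x : E) (s : 𝕂) :
    HasDerivAt (fun u : 𝕂 => NormedSpace.exp (-(u • L)) x)
      (-L (NormedSpace.exp (-(s • L)) x)) s := by
  simpa using (hasDerivAt_exp_smul_const' (-L) s).clm_apply (hasDerivAt_const s x)

section

variable {X : Type*} [NormedAddCommGroup X] [InnerProductSpace ℝ X]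

theorem inner_apply_self_nonpos_of_dissipative_symm {A : X ≃L[ℝ] X} {B : X →L[ℝ] X}
    (hdiss : ∀ Φ : X, 0 ≤ ⟪B (A.symm Φ), -(A.symm Φ)⟫) (v : X) : ⟪B v, v⟫ ≤ 0 := by
  simpa [inner_neg_right] using hdiss (A v)

theorem HasDerivAt.inner_apply_self {T : X →L[ℝ] X} (hT : (T : X →ₗ[ℝ] X).IsSymmetric)
    {w : ℝ → X} {w' : X} {s : ℝ} (hw : HasDerivAt w w' s) :
    HasDerivAt (fun u => ⟪T (w u), w u⟫) (2 * ⟪T (w s), w'⟫) s := by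
  refine ((T.hasFDerivAt.comp_hasDerivAt s hw).inner ℝ hw).congr_deriv ?_
  have hsymm : ⟪T w', w s⟫ = ⟪T (w s), w'⟫ := by
    rw [real_inner_comm]; exact (hT (w s) w').symm
  rw [Function.comp_apply, hsymm]
  ring

theorem monotone_inner_apply_exp_neg_smul_symm_comp [CompleteSpace X] {A : X ≃L[ℝ] X}
    (hA : ((A : X →L[ℝ] X) : X →ₗ[ℝ] X).IsSymmetric) {B : X →L[ℝ] X}
    (hB : ∀ v, ⟪B v, v⟫ ≤ 0) (w₀ : X) :
    Monotone fun s : ℝ =>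
      ⟪A (NormedSpace.exp (-(s • (A.symm : X →L[ℝ] X).comp B)) w₀),
        NormedSpace.exp (-(s • (A.symm : X →L[ℝ] X).comp B)) w₀⟫ := by
  set L := (A.symm : X →L[ℝ] X).comp B
  refine monotone_of_hasDerivAt_nonneg
    (fun s => (hasDerivAt_exp_neg_smul_apply_s11 L w₀ s).inner_apply_self hA) fun s => ?_
  set w := NormedSpace.exp (-(s • L)) w₀
  have hAL : ⟪A w, L w⟫ = ⟪B w, w⟫ := by
    simpa [L, real_inner_comm] using hA w (L w)
  show 0 ≤ 2 * ⟪A w, -L w⟫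
  rw [inner_neg_right, hAL]
  linarith [hB w]

end

theorem h2_stability_sobolev_abstract
    {X : Type*} [NormedAddCommGroup X] [InnerProductSpace ℝ X] [CompleteSpace X]
    (α : ℝ) (hα : 0 < α) (A : X ≃L[ℝ] X)
    (hAsa : ∀ φ ψ : X, ⟪A φ, ψ⟫ = ⟪φ, A ψ⟫)
    (hAneg : ∀ φ : X, α * ‖φ‖ ^ 2 ≤ ⟪-(A φ), φ⟫)
    (B : X →L[ℝ] X)
    (hdiss : ∀ Φ : X, 0 ≤ ⟪B (A.symm Φ), -(A.symm Φ)⟫)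
    (t : ℝ) (ht : 0 ≤ t) (w₀ : X) :
    ‖A (NormedSpace.exp (-(t • ((A.symm : X →L[ℝ] X).comp B))) w₀)‖ ≤
      ‖(A : X →L[ℝ] X)‖ * Real.sqrt (‖(A.symm : X →L[ℝ] X)‖ / α) * ‖A w₀‖ := by
  set w := NormedSpace.exp (-(t • (A.symm : X →L[ℝ] X).comp B)) w₀
  have henergy : ⟪A w₀, w₀⟫ ≤ ⟪A w, w⟫ := by
    simpa using monotone_inner_apply_exp_neg_smul_symm_comp hAsa
      (inner_apply_self_nonpos_of_dissipative_symm hdiss) w₀ ht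
  have hcoercive : α * ‖w‖ ^ 2 ≤ ‖(A.symm : X →L[ℝ] X)‖ * ‖A w₀‖ ^ 2 :=
    calc α * ‖w‖ ^ 2 ≤ ⟪-(A w), w⟫ := hAneg w
      _ ≤ ⟪-(A w₀), w₀⟫ := by simpa only [inner_neg_left, neg_le_neg_iff] using henergy
      _ ≤ ‖A w₀‖ * ‖w₀‖ := (real_inner_le_norm _ _).trans_eq (by rw [norm_neg])
      _ ≤ ‖A w₀‖ * (‖(A.symm : X →L[ℝ] X)‖ * ‖A w₀‖) := by
        gcongr; exact A.norm_le_norm_symm_mul_norm_apply w₀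
      _ = ‖(A.symm : X →L[ℝ] X)‖ * ‖A w₀‖ ^ 2 := by ring
  calc ‖A w‖ ≤ ‖(A : X →L[ℝ] X)‖ * ‖w‖ := (A : X →L[ℝ] X).le_opNorm w
    _ ≤ ‖(A : X →L[ℝ] X)‖ * (√(‖(A.symm : X →L[ℝ] X)‖ / α) * ‖A w₀‖) := by
      gcongr; exact Real.le_sqrt_div_mul_of_mul_sq_le hα (norm_nonneg _) hcoercive
    _ = _ := by ring
end

section
/- Let V be a real Hilbert space and 0 < α ≤ C_M, C_R > 0. Let m, r : V × V → ℝ be continuous bilinear forms with m symmetric, α‖φ‖² ≤ m(φ, φ), |m(φ, ψ)| ≤ C_M‖φ‖‖ψ‖, |r(φ, ψ)| ≤ C_R‖φ‖‖ψ‖ and r(φ, φ) ≥ 0 for all φ, ψ ∈ V. Write ‖φ‖_m := √m(φ, φ). Then there exists a constant C > 0, depending only on α, C_M and C_R, with the following property: for every closed subspace V_h ⊆ V with m-orthogonal projection P_h : V → V_h (characterized by m(φ − P_h φ, v_h) = 0 for all v_h ∈ V_h), and for all continuously differentiable w : [0, ∞) → V and w_h : [0, ∞) → V_h satisfying m(w'(t),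 v) + r(w(t), v) = 0 for all v ∈ V, m(w_h'(t), v_h) + r(w_h(t), v_h) = 0 for all v_h ∈ V_h, and w_h(0) = P_h(w(0)), one has for every t ≥ 0: ‖w(t) − w_h(t)‖_m ≤ C ( ‖w(0) − P_h w(0)‖_m + ‖w(t) − P_h w(t)‖_m + ∫₀ᵗ ‖w(s) − P_h w(s)‖_m ds ). -/
section aux

variable {V : Type*} [NormedAddCommGroup V] [InnerProductSpace ℝ V]

private lemma bilin_cs (m : V →ₗ[ℝ] V →ₗ[ℝ] ℝ) (hsymm : ∀ φ ψ : V, m φ ψ = m ψ φ)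
    (hnn : ∀ φ : V, 0 ≤ m φ φ) (a b : V) : m a b ^ 2 ≤ m a a * m b b := by
  have h : ∀ x : ℝ, 0 ≤ m b b * (x * x) + (2 * m a b) * x + m a a := by
    intro x
    have h1 := hnn (a + x • b)
    have h2 : m (a + x • b) (a + x • b)
        = m a a + 2 * m a b * x + m b b * (x * x) := by
      simp only [map_add, map_smul, LinearMap.add_apply, LinearMap.smul_apply,
        smul_eq_mul]
      rw [hsymm b a]; ring
    nlinarith
  have hd := discrim_le_zero h
  rw [discrim] at hd
  nlinarith

private lemma bilin_sqrt_add_le (m : V →ₗ[ℝ] V →ₗ[ℝ] ℝ)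
    (hsymm : ∀ φ ψ : V, m φ ψ = m ψ φ) (hnn : ∀ φ : V, 0 ≤ m φ φ) (a b : V) :
    Real.sqrt (m (a + b) (a + b)) ≤ Real.sqrt (m a a) + Real.sqrt (m b b) := by
  have hcs : m a b ≤ Real.sqrt (m a a) * Real.sqrt (m b b) := by
    have h1 := bilin_cs m hsymm hnn a b
    calc m a b ≤ |m a b| := le_abs_self _
      _ = Real.sqrt ((m a b) ^ 2) := (Real.sqrt_sq_eq_abs _).symm
      _ ≤ Real.sqrt (m a a * m b b) := Real.sqrt_le_sqrt h1
      _ = Real.sqrt (m a a) * Real.sqrt (m b b) := Real.sqrt_mul (hnn a) _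
  have hexp : m (a + b) (a + b)
      ≤ (Real.sqrt (m a a) + Real.sqrt (m b b)) ^ 2 := by
    have h2 : m (a + b) (a + b) = m a a + 2 * m a b + m b b := by
      simp only [map_add, LinearMap.add_apply]
      rw [hsymm b a]; ring
    have ha := Real.sq_sqrt (hnn a)
    have hb := Real.sq_sqrt (hnn b)
    nlinarith
  calc Real.sqrt (m (a + b) (a + b))
      ≤ Real.sqrt ((Real.sqrt (m a a) + Real.sqrt (m b b)) ^ 2) :=
        Real.sqrt_le_sqrt hexp
    _ = Real.sqrt (m a a) + Real.sqrt (m b b) :=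
        Real.sqrt_sq (by positivity)

end aux

set_option maxHeartbeats 1000000 in
/-- Gronwall-free semi-discrete error estimate for the abstract Sobolev equation. -/
theorem sobolev_semidiscrete_error_estimate
    {V : Type*} [NormedAddCommGroup V] [InnerProductSpace ℝ V] [CompleteSpace V]
    (α C_M C_R : ℝ) (hα : 0 < α) (hαC : α ≤ C_M) (hCR : 0 < C_R)
    (m r : V →ₗ[ℝ] V →ₗ[ℝ] ℝ)
    (hmsymm : ∀ φ ψ : V, m φ ψ = m ψ φ)
    (hml : ∀ φ : V, α * ‖φ‖ ^ 2 ≤ m φ φ)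
    (hmu : ∀ φ ψ : V, |m φ ψ| ≤ C_M * ‖φ‖ * ‖ψ‖)
    (hru : ∀ φ ψ : V, |r φ ψ| ≤ C_R * ‖φ‖ * ‖ψ‖)
    (hrpos : ∀ φ : V, 0 ≤ r φ φ) :
    ∃ C : ℝ, 0 < C ∧
      ∀ (Vh : Submodule ℝ V), IsClosed (Vh : Set V) →
      ∀ (Ph : V → V), (∀ φ : V, Ph φ ∈ Vh) →
        (∀ φ : V, ∀ vh ∈ Vh, m (φ - Ph φ) vh = 0) →
      ∀ (w w' wh wh' : ℝ → V),
        (∀ t : ℝ, 0 ≤ t → HasDerivAt w (w' t) t) →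
        ContinuousOn w' (Set.Ici 0) →
        (∀ t : ℝ, 0 ≤ t → HasDerivAt wh (wh' t) t) →
        ContinuousOn wh' (Set.Ici 0) →
        (∀ t : ℝ, 0 ≤ t → wh t ∈ Vh) →
        (∀ t : ℝ, 0 ≤ t → ∀ v : V, m (w' t) v + r (w t) v = 0) →
        (∀ t : ℝ, 0 ≤ t → ∀ vh ∈ Vh, m (wh' t) vh + r (wh t) vh = 0) →
        wh 0 = Ph (w 0) →
        ∀ t : ℝ, 0 ≤ t →
          Real.sqrt (m (w t - wh t) (w t - wh t)) ≤
            C * (Real.sqrt (m (w 0 - Ph (w 0)) (w 0 - Ph (w 0))) +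
                 Real.sqrt (m (w t - Ph (w t)) (w t - Ph (w t))) +
                 ∫ s in (0:ℝ)..t,
                   Real.sqrt (m (w s - Ph (w s)) (w s - Ph (w s)))) := by
  have hmnn : ∀ φ : V, 0 ≤ m φ φ := fun φ => le_trans (by positivity) (hml φ)
  have htri := fun a b => bilin_sqrt_add_le m hmsymm hmnn a b
  have hnle : ∀ φ : V, Real.sqrt α * ‖φ‖ ≤ Real.sqrt (m φ φ) := by
    intro φ
    have h1 : Real.sqrt (α * ‖φ‖ ^ 2) ≤ Real.sqrt (m φ φ) := Real.sqrt_le_sqrt (hml φ)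
    rwa [Real.sqrt_mul hα.le, Real.sqrt_sq (norm_nonneg φ)] at h1
  set M : V →L[ℝ] V →L[ℝ] ℝ := LinearMap.mkContinuous₂ m C_M
    (fun x y => by rw [Real.norm_eq_abs]; exact hmu x y) with hMdef
  have hMapp : ∀ x y : V, M x y = m x y := fun x y => rfl
  refine ⟨1 + 2 * C_R / α, by positivity, ?_⟩
  intro Vh hVhcl Ph hPhmem hPhorth w w' wh wh' hw hw'c hwh hwh'c hwhmem heq heqh h0 t ht
  -- uniqueness of the projection
  have huniq : ∀ (φ x : V), x ∈ Vh → (∀ vh ∈ Vh, m (φ - x) vh = 0) → x = Ph φ := by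
    intro φ x hx hxorth
    have hd : Ph φ - x ∈ Vh := Vh.sub_mem (hPhmem φ) hx
    have e1 := hPhorth φ _ hd
    have e2 := hxorth _ hd
    have hdd : m (Ph φ - x) (Ph φ - x) = 0 := by
      simp only [map_sub, LinearMap.sub_apply] at e1 e2 ⊢
      linarith
    have hz : Ph φ - x = 0 := by
      have := hml (Ph φ - x)
      rw [hdd] at this
      by_contra hne
      have hp : 0 < ‖Ph φ - x‖ := norm_pos_iff.mpr hne
      nlinarith [mul_pos hα (pow_pos hp 2)]
    have : Ph φ = x := by
      have := sub_eq_zero.mp hz; exact this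
    exact this.symm
  have hadd : ∀ φ ψ : V, Ph (φ + ψ) = Ph φ + Ph ψ := by
    intro φ ψ
    refine (huniq (φ + ψ) _ (Vh.add_mem (hPhmem φ) (hPhmem ψ)) ?_).symm
    intro vh hvh
    have h1 := hPhorth φ vh hvh
    have h2 := hPhorth ψ vh hvh
    have hsub : φ + ψ - (Ph φ + Ph ψ) = (φ - Ph φ) + (ψ - Ph ψ) := by abel
    rw [hsub, map_add, LinearMap.add_apply, h1, h2, add_zero]
  have hsmul : ∀ (c : ℝ) (φ : V), Ph (c • φ) = c • Ph φ := by
    intro c φ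
    refine (huniq (c • φ) _ (Vh.smul_mem c (hPhmem φ)) ?_).symm
    intro vh hvh
    have h1 := hPhorth φ vh hvh
    have hsub : c • φ - c • Ph φ = c • (φ - Ph φ) := by
      rw [smul_sub]
    rw [hsub, map_smul, LinearMap.smul_apply, h1, smul_zero]
  have hPb : ∀ φ : V, ‖Ph φ‖ ≤ (C_M / α) * ‖φ‖ := by
    intro φ
    by_cases hz : Ph φ = 0
    · rw [hz, norm_zero]
      have hCM : 0 < C_M := lt_of_lt_of_le hα hαC
      positivity
    · have h1 : α * ‖Ph φ‖ ^ 2 ≤ m (Ph φ) (Ph φ) := hml _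
      have h2 : m (Ph φ) (Ph φ) = m φ (Ph φ) := by
        have h3 := hPhorth φ (Ph φ) (hPhmem φ)
        rw [map_sub, LinearMap.sub_apply] at h3
        linarith
      have h3 : m φ (Ph φ) ≤ C_M * ‖φ‖ * ‖Ph φ‖ := le_trans (le_abs_self _) (hmu _ _)
      have hn : 0 < ‖Ph φ‖ := norm_pos_iff.mpr hz
      rw [div_mul_eq_mul_div, le_div_iff₀ hα]
      nlinarith
  set Pl : V →ₗ[ℝ] V :=
    { toFun := Ph, map_add' := hadd, map_smul' := hsmul } with hPldef
  set P : V →L[ℝ] V := LinearMap.mkContinuous Pl (C_M / α) hPb with hPdef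
  have hPapp : ∀ φ : V, P φ = Ph φ := fun φ => rfl
  -- abbreviations
  -- abbreviations
  set θ : ℝ → V := fun s => Ph (w s) - wh s with hθdef
  set θ' : ℝ → V := fun s => Ph (w' s) - wh' s with hθ'def
  set ρ : ℝ → V := fun s => w s - Ph (w s) with hρdef
  set f : ℝ → ℝ := fun s => m (θ s) (θ s) with hfdef
  set g : ℝ → ℝ := fun s => Real.sqrt (m (ρ s) (ρ s)) with hgdef
  -- facts that use definitional unfolding (proved before making the defs opaque)
  have hθd : ∀ s : ℝ, 0 ≤ s → HasDerivAt θ (θ' s) s := by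
    intro s hs
    have h1 : HasDerivAt (fun u => P (w u)) (P (w' s)) s :=
      (P.hasFDerivAt).comp_hasDerivAt s (hw s hs)
    exact h1.sub (hwh s hs)
  have hwc : ContinuousOn w (Set.Ici 0) :=
    fun s hs => (hw s hs).continuousAt.continuousWithinAt
  have hwhc : ContinuousOn wh (Set.Ici 0) :=
    fun s hs => (hwh s hs).continuousAt.continuousWithinAt
  have hθc : ContinuousOn θ (Set.Ici 0) :=
    ((P.continuous.comp_continuousOn hwc).sub hwhc)
  have hθ'c : ContinuousOn θ' (Set.Ici 0) :=
    ((P.continuous.comp_continuousOn hw'c).sub hwh'c)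
  have hρc : ContinuousOn ρ (Set.Ici 0) :=
    (hwc.sub (P.continuous.comp_continuousOn hwc))
  have hbil : ∀ (u v : ℝ → V), ContinuousOn u (Set.Ici 0) → ContinuousOn v (Set.Ici 0) →
      ContinuousOn (fun s => m (u s) (v s)) (Set.Ici 0) := by
    intro u v hu hv
    have : ContinuousOn (fun s => M (u s) (v s)) (Set.Ici 0) :=
      (M.continuous.comp_continuousOn hu).clm_apply hv
    exact this
  have hfc : ContinuousOn f (Set.Ici 0) := hbil θ θ hθc hθc
  have hgc : ContinuousOn g (Set.Ici 0) := (hbil ρ ρ hρc hρc).sqrt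
  have hDc : ContinuousOn (fun u => 2 * m (θ' u) (θ u)) (Set.Ici 0) :=
    (continuousOn_const.mul (hbil θ' θ hθ'c hθc))
  have hfd : ∀ s : ℝ, 0 ≤ s → HasDerivAt f (2 * m (θ' s) (θ s)) s := by
    intro s hs
    have hc : HasDerivAt (fun u => M (θ u)) (M (θ' s)) s :=
      (M.hasFDerivAt).comp_hasDerivAt s (hθd s hs)
    have h1 := hc.clm_apply (hθd s hs)
    have h2 : M (θ' s) (θ s) + M (θ s) (θ' s) = 2 * m (θ' s) (θ s) := by
      rw [hMapp, hMapp, hmsymm (θ s) (θ' s)]; ring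
    rw [h2] at h1
    exact h1
  have hfnn : ∀ s : ℝ, 0 ≤ f s := fun s => hmnn (θ s)
  have hgnn : ∀ s : ℝ, 0 ≤ g s := fun s => Real.sqrt_nonneg _
  have hθmem : ∀ s : ℝ, 0 ≤ s → θ s ∈ Vh :=
    fun s hs => Vh.sub_mem (hPhmem (w s)) (hwhmem s hs)
  have hθ0 : θ 0 = 0 := by simp only [hθdef, h0, sub_self]
  have hf0 : f 0 = 0 := by simp only [hfdef, hθ0, map_zero, LinearMap.zero_apply]
  -- the key differential inequality
  have hkey : ∀ s : ℝ, 0 ≤ s →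
      2 * m (θ' s) (θ s) ≤ 2 * ((C_R / α) * g s) * Real.sqrt (f s) := by
    intro s hs
    have hθm := hθmem s hs
    have e4 : m (θ' s) (θ s) = -(r (ρ s) (θ s)) - r (θ s) (θ s) := by
      have e1 := hPhorth (w' s) (θ s) hθm
      have e2 := heq s hs (θ s)
      have e3 := heqh s hs (θ s) hθm
      simp only [hθ'def, hθdef, hρdef, map_sub, map_add, LinearMap.sub_apply,
        LinearMap.add_apply] at e1 e2 e3 ⊢
      linarith
    have b1 : -(r (ρ s) (θ s)) ≤ C_R * ‖ρ s‖ * ‖θ s‖ :=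
      le_trans (neg_le_abs _) (hru _ _)
    have b2 : Real.sqrt α * ‖ρ s‖ ≤ g s := hnle _
    have b3 : Real.sqrt α * ‖θ s‖ ≤ Real.sqrt (f s) := hnle _
    have hαs : Real.sqrt α ^ 2 = α := Real.sq_sqrt hα.le
    have b4 : (Real.sqrt α * ‖ρ s‖) * (Real.sqrt α * ‖θ s‖)
        ≤ g s * Real.sqrt (f s) :=
      mul_le_mul b2 b3 (by positivity) (le_trans (by positivity) b2)
    have b4' : α * (‖ρ s‖ * ‖θ s‖) ≤ g s * Real.sqrt (f s) := by
      calc α * (‖ρ s‖ * ‖θ s‖)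
          = (Real.sqrt α * ‖ρ s‖) * (Real.sqrt α * ‖θ s‖) := by
            conv_lhs => rw [← hαs]
            ring
        _ ≤ g s * Real.sqrt (f s) := b4
    have b5 : C_R * (‖ρ s‖ * ‖θ s‖) ≤ C_R / α * (g s * Real.sqrt (f s)) := by
      have b5' := mul_le_mul_of_nonneg_left b4' hCR.le
      rw [div_mul_eq_mul_div, le_div_iff₀ hα]
      linarith
    have hchain : m (θ' s) (θ s) ≤ C_R / α * (g s * Real.sqrt (f s)) := by
      rw [e4]
      linarith [b1, b5, hrpos (θ s)]
    linarith [hchain]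
  -- various equalities relating goal terms to the abbreviations
  have hsplit : w t - wh t = ρ t + θ t := by
    simp only [hρdef, hθdef]; abel
  have htri' : Real.sqrt (m (w t - wh t) (w t - wh t)) ≤ g t + Real.sqrt (f t) := by
    rw [hsplit]; exact htri (ρ t) (θ t)
  have hInt_eq : (∫ s in (0:ℝ)..t,
      Real.sqrt (m (w s - Ph (w s)) (w s - Ph (w s)))) = ∫ s in (0:ℝ)..t, g s := rfl
  have hB : Real.sqrt (m (w t - Ph (w t)) (w t - Ph (w t))) = g t := rfl
  -- make everything opaque from here on
  clear_value θ θ' ρ f g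
  clear hθdef hθ'def hρdef hfdef hgdef
  clear hPapp hPdef P hPldef Pl hMapp hMdef M
  -- FTC
  have hIcc_sub : ∀ s : ℝ, s ∈ Set.Icc (0:ℝ) t → Set.uIcc (0:ℝ) s ⊆ Set.Ici (0:ℝ) := by
    intro s hs
    rw [Set.uIcc_of_le hs.1]
    exact fun u hu => hu.1
  have hFTC : ∀ s ∈ Set.Icc (0:ℝ) t,
      f s = ∫ u in (0:ℝ)..s, 2 * m (θ' u) (θ u) := by
    intro s hs
    have hint : IntervalIntegrable (fun u => 2 * m (θ' u) (θ u))
        MeasureTheory.volume 0 s :=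
      (hDc.mono (hIcc_sub s hs)).intervalIntegrable
    have := intervalIntegral.integral_eq_sub_of_hasDerivAt
      (f := f) (f' := fun u => 2 * m (θ' u) (θ u))
      (fun u hu => hfd u (hIcc_sub s hs hu)) hint
    rw [this, hf0, sub_zero]
  -- maximum of sqrt f on [0, t]
  have hsfc : ContinuousOn (fun s => Real.sqrt (f s)) (Set.Icc 0 t) :=
    (hfc.mono (fun u hu => hu.1)).sqrt
  obtain ⟨s0, hs0mem, hs0max⟩ :=
    isCompact_Icc.exists_isMaxOn (Set.nonempty_Icc.mpr ht) hsfc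
  have hmax : ∀ u ∈ Set.Icc (0:ℝ) t, Real.sqrt (f u) ≤ Real.sqrt (f s0) :=
    fun u hu => hs0max hu
  set Mx : ℝ := Real.sqrt (f s0) with hMxdef
  set G : ℝ := ∫ s in (0:ℝ)..t, g s with hGdef
  have hGnn : 0 ≤ G := by
    rw [hGdef]; exact intervalIntegral.integral_nonneg ht (fun u _ => hgnn u)
  have hgint : IntervalIntegrable g MeasureTheory.volume 0 t :=
    (hgc.mono (hIcc_sub t ⟨ht, le_refl t⟩)).intervalIntegrable
  have hMxnn : 0 ≤ Mx := Real.sqrt_nonneg _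
  have hMsq : Mx ^ 2 = f s0 := Real.sq_sqrt (hfnn s0)
  clear_value Mx G
  have hbound : f s0 ≤ 2 * (C_R / α) * Mx * G := by
    rw [hFTC s0 hs0mem]
    have hint1 : IntervalIntegrable (fun u => 2 * m (θ' u) (θ u))
        MeasureTheory.volume 0 s0 :=
      (hDc.mono (hIcc_sub s0 hs0mem)).intervalIntegrable
    have hint2 : IntervalIntegrable (fun u => 2 * (C_R / α) * Mx * g u)
        MeasureTheory.volume 0 s0 :=
      ((continuousOn_const.mul (hgc.mono (hIcc_sub s0 hs0mem))) :
        ContinuousOn (fun u => 2 * (C_R / α) * Mx * g u) _).intervalIntegrable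
    have step1 : ∫ u in (0:ℝ)..s0, 2 * m (θ' u) (θ u)
        ≤ ∫ u in (0:ℝ)..s0, 2 * (C_R / α) * Mx * g u := by
      refine intervalIntegral.integral_mono_on hs0mem.1 hint1 hint2 ?_
      intro u hu
      have h1 := hkey u hu.1
      have h2 : Real.sqrt (f u) ≤ Mx := hmax u ⟨hu.1, hu.2.trans hs0mem.2⟩
      have hcnn : 0 ≤ 2 * (C_R / α * g u) :=
        mul_nonneg (by norm_num) (mul_nonneg (div_nonneg hCR.le hα.le) (hgnn u))
      calc 2 * m (θ' u) (θ u) ≤ 2 * (C_R / α * g u) * Real.sqrt (f u) := h1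
        _ ≤ 2 * (C_R / α * g u) * Mx := mul_le_mul_of_nonneg_left h2 hcnn
        _ = 2 * (C_R / α) * Mx * g u := by ring
    have step2 : ∫ u in (0:ℝ)..s0, 2 * (C_R / α) * Mx * g u
        = 2 * (C_R / α) * Mx * ∫ u in (0:ℝ)..s0, g u :=
      intervalIntegral.integral_const_mul _ _
    have step3 : ∫ u in (0:ℝ)..s0, g u ≤ G := by
      rw [hGdef]
      refine intervalIntegral.integral_mono_interval (le_refl (0:ℝ)) hs0mem.1 hs0mem.2
        ?_ hgint
      filter_upwards with u
      exact hgnn u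
    calc ∫ u in (0:ℝ)..s0, 2 * m (θ' u) (θ u)
        ≤ ∫ u in (0:ℝ)..s0, 2 * (C_R / α) * Mx * g u := step1
      _ = 2 * (C_R / α) * Mx * ∫ u in (0:ℝ)..s0, g u := step2
      _ ≤ 2 * (C_R / α) * Mx * G := by
          have hcf : 0 ≤ 2 * (C_R / α) * Mx := by positivity
          exact mul_le_mul_of_nonneg_left step3 hcf
  have hMx2 : Mx ≤ 2 * (C_R / α) * G := by
    rcases eq_or_lt_of_le hMxnn with h | h
    · rw [← h]; positivity
    · nlinarith [hbound, hMsq, h]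
  have hft : Real.sqrt (f t) ≤ 2 * (C_R / α) * G := by
    have h1 : Real.sqrt (f t) ≤ Mx := hmax t ⟨ht, le_refl t⟩
    linarith
  -- final assembly
  rw [hB]
  have hA : 0 ≤ Real.sqrt (m (w 0 - Ph (w 0)) (w 0 - Ph (w 0))) := Real.sqrt_nonneg _
  have hK : 0 ≤ 2 * C_R / α := by positivity
  have hgtnn := hgnn t
  have h1 : 2 * (C_R / α) * G = 2 * C_R / α * G := by ring
  rw [h1] at hft
  generalize hKg : 2 * C_R / α = K at hft hK ⊢
  nlinarith [mul_nonneg hK hA, mul_nonneg hK hgtnn, mul_nonneg hK hGnn,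
    htri', hft, hGnn, hA, hgtnn]
end

section
/- Let W be a real Hilbert space, α > 0, M : W →L[ℝ] W self-adjoint with ⟪M φ, φ⟫ ≥ α‖φ‖² for all φ ∈ W, R : W →L[ℝ] W a continuous linear operator with Hilbert adjoint R*, and V_h ⊆ V ⊆ W closed subspaces. Fix e_i, e_j ∈ W. For k ∈ {i, j} let w_k ∈ V and w_k^h ∈ V_h satisfy ⟪M(e_k + w_k), v⟫ = 0 for all v ∈ V and ⟪M(e_k + w_k^h), v_h⟫ = 0 for all v_h ∈ V_h, and write φ_k := e_k + w_k, φ_k^h := e_k + w_k^h. Let g_j ∈ V and g_j^h ∈ V_h satisfy ⟪M g_j + R φ_j, v⟫ = 0 for all v ∈ V and ⟪M g_j^h + R φ_j^h, v_h⟫ = 0 for all v_h ∈ V_h, and let g̃_i ∈ V and g̃_i^h ∈ V_h satisfy the transposed problems ⟪M g̃_i + R*(φ_i), v⟫ = 0 for all v ∈ V and ⟪M g̃_i^h + R*(φ_i^h), v_h⟫ = 0 for all v_h ∈ V_h. Then the error identity ⟪R φ_j, φ_i⟫ − ⟪R φ_j^h, φ_i^h⟫ = ⟪R(w_j^h − w_j),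 w_i − w_i^h⟫ + ⟪M(g_j − g_j^h), w_i^h − w_i⟫ + ⟪M(w_j − w_j^h), g̃_i^h − g̃_i⟫ holds. -/
open RealInnerProductSpace

/-- The superconvergence error identity for the effective damping parameter. -/
theorem micro_error_identity_damping
    {W : Type*} [NormedAddCommGroup W] [InnerProductSpace ℝ W] [CompleteSpace W]
    (α : ℝ) (hα : 0 < α)
    (M : W →L[ℝ] W) (hMsa : ∀ φ ψ : W, ⟪M φ, ψ⟫ = ⟪φ, M ψ⟫)
    (hMl : ∀ φ : W, α * ‖φ‖ ^ 2 ≤ ⟪M φ, φ⟫)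
    (R : W →L[ℝ] W)
    (V Vh : Submodule ℝ W) (hV : IsClosed (V : Set W)) (hVh : IsClosed (Vh : Set W))
    (hVhV : Vh ≤ V)
    (e_i e_j w_i w_j wh_i wh_j g_j gh_j gt_i gth_i : W)
    (hwiV : w_i ∈ V) (hwjV : w_j ∈ V) (hwhiV : wh_i ∈ Vh) (hwhjV : wh_j ∈ Vh)
    (hwi : ∀ v ∈ V, ⟪M (e_i + w_i), v⟫ = 0)
    (hwj : ∀ v ∈ V, ⟪M (e_j + w_j), v⟫ = 0)
    (hwhi : ∀ vh ∈ Vh, ⟪M (e_i + wh_i), vh⟫ = 0)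
    (hwhj : ∀ vh ∈ Vh, ⟪M (e_j + wh_j), vh⟫ = 0)
    (hgjV : g_j ∈ V) (hghjV : gh_j ∈ Vh)
    (hgj : ∀ v ∈ V, ⟪M g_j + R (e_j + w_j), v⟫ = 0)
    (hghj : ∀ vh ∈ Vh, ⟪M gh_j + R (e_j + wh_j), vh⟫ = 0)
    (hgtiV : gt_i ∈ V) (hgthiV : gth_i ∈ Vh)
    (hgti : ∀ v ∈ V, ⟪M gt_i + (ContinuousLinearMap.adjoint R) (e_i + w_i), v⟫ = 0)
    (hgthi : ∀ vh ∈ Vh, ⟪M gth_i + (ContinuousLinearMap.adjoint R) (e_i + wh_i), vh⟫ = 0) :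
    ⟪R (e_j + w_j), e_i + w_i⟫ - ⟪R (e_j + wh_j), e_i + wh_i⟫ =
      ⟪R (wh_j - w_j), w_i - wh_i⟫ + ⟪M (g_j - gh_j), wh_i - w_i⟫ +
        ⟪M (w_j - wh_j), gth_i - gt_i⟫ := by

  have hδi : w_i - wh_i ∈ V := V.sub_mem hwiV (hVhV hwhiV)
  have hδj : w_j - wh_j ∈ V := V.sub_mem hwjV (hVhV hwhjV)
  -- Galerkin orthogonality against discrete functions
  have h1 : ⟪M (w_j - wh_j), gth_i⟫ = 0 := by
    have ha := hwj gth_i (hVhV hgthiV)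
    have hb := hwhj gth_i hgthiV
    have : w_j - wh_j = (e_j + w_j) - (e_j + wh_j) := by abel
    rw [this, map_sub, inner_sub_left, ha, hb]; ring
  have h2 : ⟪M (w_i - wh_i), gh_j⟫ = 0 := by
    have ha := hwi gh_j (hVhV hghjV)
    have hb := hwhi gh_j hghjV
    have : w_i - wh_i = (e_i + w_i) - (e_i + wh_i) := by abel
    rw [this, map_sub, inner_sub_left, ha, hb]; ring
  have h3 : ⟪M g_j, w_i - wh_i⟫ + ⟪R (e_j + w_j), w_i - wh_i⟫ = 0 := by
    have := hgj _ hδi; rwa [inner_add_left] at this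
  have h4 : ⟪M gt_i, w_j - wh_j⟫ + ⟪(ContinuousLinearMap.adjoint R) (e_i + w_i), w_j - wh_j⟫ = 0 := by
    have := hgti _ hδj; rwa [inner_add_left] at this
  have h5 : ⟪(ContinuousLinearMap.adjoint R) (e_i + w_i), w_j - wh_j⟫
      = ⟪R (w_j - wh_j), e_i + w_i⟫ := by
    rw [ContinuousLinearMap.adjoint_inner_left, real_inner_comm]
  have h6 : ⟪M gt_i, w_j - wh_j⟫ = ⟪M (w_j - wh_j), gt_i⟫ := by
    rw [hMsa, real_inner_comm]
  have h7 : ⟪M gh_j, w_i - wh_i⟫ = ⟪M (w_i - wh_i), gh_j⟫ := by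
    rw [hMsa, real_inner_comm]
  simp only [inner_sub_left, inner_sub_right, inner_add_left, inner_add_right,
    map_sub, map_add] at h1 h2 h3 h4 h5 h6 h7 ⊢
  linarith
end

section
/- Let X be a real Hilbert space, 0 < α ≤ C_M, m : X × X → ℝ a continuous symmetric bilinear form with α‖Φ‖² ≤ m(Φ, Φ) and |m(Φ, Ψ)| ≤ C_M‖Φ‖‖Ψ‖ for all Φ, Ψ ∈ X. Let V_H ⊆ X be a closed subspace and m_H : V_H × V_H → ℝ a continuous symmetric bilinear form with α‖Φ_H‖² ≤ m_H(Φ_H, Φ_H) for all Φ_H ∈ V_H; write ‖Φ_H‖_{m_H} := √m_H(Φ_H, Φ_H). Let P_H : X → V_H satisfy m_H(P_H Φ, Ψ_H) = m(Φ, Ψ_H) for all Ψ_H ∈ V_H. Then for every Φ ∈ X and every Φ_I ∈ V_H: ‖P_H Φ − Φ_I‖_{m_H} ≤ (C_M / √α) ‖Φ − Φ_I‖ + sup { |m(Φ_I, Ψ_H) − m_H(Φ_I, Ψ_H)| : Ψ_H ∈ V_H, ‖Ψ_H‖_{m_H} ≤ 1 }. -/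
lemma aux_bilin_cs {V : Type*} [AddCommGroup V] [Module ℝ V]
    (B : V →ₗ[ℝ] V →ₗ[ℝ] ℝ) (hs : ∀ x y, B x y = B y x)
    (hnn : ∀ v, 0 ≤ B v v) (x y : V) :
    |B x y| ≤ Real.sqrt (B x x) * Real.sqrt (B y y) := by
  have hdisc : discrim (B y y) (2 * B x y) (B x x) ≤ 0 := by
    apply discrim_le_zero
    intro t
    have h := hnn (x + t • y)
    have : B (x + t • y) (x + t • y)
        = B y y * (t * t) + 2 * B x y * t + B x x := by
      simp [map_add, map_smul, smul_eq_mul, hs y x]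
      ring
    linarith [this ▸ h]
  have hsq : (B x y) ^ 2 ≤ B x x * B y y := by
    unfold discrim at hdisc; nlinarith
  calc |B x y| = Real.sqrt ((B x y) ^ 2) := by
        rw [Real.sqrt_sq_eq_abs]
    _ ≤ Real.sqrt (B x x * B y y) := Real.sqrt_le_sqrt hsq
    _ = Real.sqrt (B x x) * Real.sqrt (B y y) := Real.sqrt_mul (hnn x) _

/-- The HMM-Ritz projection error bound: interpolation error plus conformity error. -/
theorem hmm_ritz_projection_error_bound
    {X : Type*} [NormedAddCommGroup X] [InnerProductSpace ℝ X] [CompleteSpace X]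
    (α C_M : ℝ) (hα : 0 < α) (hαC : α ≤ C_M)
    (m : X →ₗ[ℝ] X →ₗ[ℝ] ℝ)
    (hmsymm : ∀ Φ Ψ : X, m Φ Ψ = m Ψ Φ)
    (hml : ∀ Φ : X, α * ‖Φ‖ ^ 2 ≤ m Φ Φ)
    (hmu : ∀ Φ Ψ : X, |m Φ Ψ| ≤ C_M * ‖Φ‖ * ‖Ψ‖)
    (VH : Submodule ℝ X) (hVH : IsClosed (VH : Set X))
    (mH : VH →ₗ[ℝ] VH →ₗ[ℝ] ℝ)
    (hmHsymm : ∀ ΦH ΨH : VH, mH ΦH ΨH = mH ΨH ΦH)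
    (hmHcont : Continuous fun p : VH × VH => mH p.1 p.2)
    (hmHl : ∀ ΦH : VH, α * ‖ΦH‖ ^ 2 ≤ mH ΦH ΦH)
    (PH : X → VH) (hPH : ∀ (Φ : X) (ΨH : VH), mH (PH Φ) ΨH = m Φ (ΨH : X))
    (Φ : X) (ΦI : VH) :
    Real.sqrt (mH (PH Φ - ΦI) (PH Φ - ΦI)) ≤
      (C_M / Real.sqrt α) * ‖Φ - (ΦI : X)‖ +
        sSup {c : ℝ | ∃ ΨH : VH, Real.sqrt (mH ΨH ΨH) ≤ 1 ∧
          c = |m (ΦI : X) (ΨH : X) - mH ΦI ΨH|} := by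
  have hmHnn : ∀ v : VH, 0 ≤ mH v v := fun v => le_trans (by positivity) (hmHl v)
  set Sset := {c : ℝ | ∃ ΨH : VH, Real.sqrt (mH ΨH ΨH) ≤ 1 ∧
      c = |m (ΦI : X) (ΨH : X) - mH ΦI ΨH|} with hSset
  set S := sSup Sset with hS
  have hsqα : (0:ℝ) < Real.sqrt α := Real.sqrt_pos.mpr hα
  -- bounded above
  have hbdd : BddAbove Sset := by
    refine ⟨C_M * ‖(ΦI : X)‖ / Real.sqrt α + Real.sqrt (mH ΦI ΦI), ?_⟩
    rintro c ⟨Ψ, hΨ, rfl⟩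
    have hΨΨ : mH Ψ Ψ ≤ 1 := by
      have := Real.sqrt_le_sqrt (hmHl Ψ)
      nlinarith [Real.sq_sqrt (hmHnn Ψ), Real.sqrt_nonneg (mH Ψ Ψ), hmHnn Ψ]
    have hΨn : ‖Ψ‖ ≤ 1 / Real.sqrt α := by
      rw [le_div_iff₀ hsqα]
      nlinarith [hmHl Ψ, norm_nonneg Ψ, Real.sq_sqrt hα.le, Real.sqrt_nonneg α]
    have h1 : |m (ΦI : X) (Ψ : X)| ≤ C_M * ‖(ΦI : X)‖ / Real.sqrt α := by
      calc |m (ΦI : X) (Ψ : X)| ≤ C_M * ‖(ΦI : X)‖ * ‖(Ψ : X)‖ := hmu _ _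
        _ ≤ C_M * ‖(ΦI : X)‖ * (1 / Real.sqrt α) := by
            have hΨn' : ‖(Ψ : X)‖ = ‖Ψ‖ := rfl
            have hCn : (0:ℝ) ≤ C_M * ‖(ΦI : X)‖ :=
              mul_nonneg (by linarith) (norm_nonneg _)
            exact mul_le_mul_of_nonneg_left (hΨn' ▸ hΨn) hCn
        _ = C_M * ‖(ΦI : X)‖ / Real.sqrt α := by ring
    have h2 : |mH ΦI Ψ| ≤ Real.sqrt (mH ΦI ΦI) := by
      calc |mH ΦI Ψ| ≤ Real.sqrt (mH ΦI ΦI) * Real.sqrt (mH Ψ Ψ) :=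
            aux_bilin_cs mH hmHsymm hmHnn _ _
        _ ≤ Real.sqrt (mH ΦI ΦI) * 1 :=
            mul_le_mul_of_nonneg_left hΨ (Real.sqrt_nonneg _)
        _ = _ := mul_one _
    calc |m (ΦI : X) (Ψ : X) - mH ΦI Ψ| ≤ |m (ΦI : X) (Ψ : X)| + |mH ΦI Ψ| :=
          abs_sub _ _
      _ ≤ _ := add_le_add h1 h2
  have hSnonneg : 0 ≤ S := by
    apply le_csSup hbdd
    refine ⟨0, by simp, by simp⟩
  set E : VH := PH Φ - ΦI with hE
  set t := Real.sqrt (mH E E) with ht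
  have ht2 : t ^ 2 = mH E E := Real.sq_sqrt (hmHnn E)
  have htnn : 0 ≤ t := Real.sqrt_nonneg _
  -- key identity
  have hkey : mH E E = m (Φ - (ΦI : X)) (E : X) + (m (ΦI : X) (E : X) - mH ΦI E) := by
    have h1 : mH E E = mH (PH Φ) E - mH ΦI E := by
      rw [hE]; simp only [map_sub, LinearMap.sub_apply]; ring
    rw [h1, hPH Φ E]
    simp only [map_sub, LinearMap.sub_apply]
    ring
  -- norm bound
  have hEn : ‖E‖ ≤ t / Real.sqrt α := by
    rw [le_div_iff₀ hsqα]
    nlinarith [hmHl E, norm_nonneg E, Real.sq_sqrt hα.le, Real.sqrt_nonneg α, ht2]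
  rcases eq_or_lt_of_le htnn with h0 | htpos
  · rw [← h0]
    exact add_nonneg (mul_nonneg (div_nonneg (by linarith) hsqα.le) (norm_nonneg _)) hSnonneg
  -- normalized element
  · set Ψ : VH := t⁻¹ • E with hΨdef
    have htne : t ≠ 0 := ne_of_gt htpos
    have hΨnorm : Real.sqrt (mH Ψ Ψ) ≤ 1 := by
      have h1 : mH Ψ Ψ = t⁻¹ * t⁻¹ * mH E E := by
        simp [hΨdef, map_smul, smul_eq_mul]; ring
      have h2 : mH Ψ Ψ = 1 := by
        rw [h1, ← ht2]; field_simp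
      rw [h2, Real.sqrt_one]
    have hmem : |m (ΦI : X) ((Ψ : VH) : X) - mH ΦI Ψ| ∈ Sset :=
      ⟨Ψ, hΨnorm, rfl⟩
    have hle : |m (ΦI : X) ((Ψ : VH) : X) - mH ΦI Ψ| ≤ S := le_csSup hbdd hmem
    have hscale : m (ΦI : X) ((Ψ : VH) : X) - mH ΦI Ψ
        = t⁻¹ * (m (ΦI : X) (E : X) - mH ΦI E) := by
      have : ((Ψ : VH) : X) = t⁻¹ • (E : X) := rfl
      rw [this]
      simp [hΨdef, map_smul, smul_eq_mul]
      ring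
    have h2 : m (ΦI : X) (E : X) - mH ΦI E ≤ t * S := by
      have := le_trans (le_abs_self _) hle
      rw [hscale] at this
      have h := mul_le_mul_of_nonneg_left this htnn
      calc m (ΦI : X) (E : X) - mH ΦI E
          = t * (t⁻¹ * (m (ΦI : X) (E : X) - mH ΦI E)) := by
            field_simp
        _ ≤ t * S := h
    have h1 : m (Φ - (ΦI : X)) (E : X) ≤ C_M * ‖Φ - (ΦI : X)‖ * (t / Real.sqrt α) := by
      calc m (Φ - (ΦI : X)) (E : X) ≤ |m (Φ - (ΦI : X)) (E : X)| := le_abs_self _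
        _ ≤ C_M * ‖Φ - (ΦI : X)‖ * ‖(E : X)‖ := hmu _ _
        _ ≤ C_M * ‖Φ - (ΦI : X)‖ * (t / Real.sqrt α) := by
            have hCn : (0:ℝ) ≤ C_M * ‖Φ - (ΦI : X)‖ :=
              mul_nonneg (by linarith) (norm_nonneg _)
            exact mul_le_mul_of_nonneg_left hEn hCn
    have hfin : t ^ 2 ≤ (C_M / Real.sqrt α * ‖Φ - (ΦI : X)‖ + S) * t := by
      rw [ht2, hkey]
      calc m (Φ - (ΦI : X)) (E : X) + (m (ΦI : X) (E : X) - mH ΦI E)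
          ≤ C_M * ‖Φ - (ΦI : X)‖ * (t / Real.sqrt α) + t * S := add_le_add h1 h2
        _ = (C_M / Real.sqrt α * ‖Φ - (ΦI : X)‖ + S) * t := by ring
    have h' : t * t ≤ (C_M / Real.sqrt α * ‖Φ - (ΦI : X)‖ + S) * t := by
      nlinarith [hfin]
    exact le_of_mul_le_mul_right h' htpos
end

section
/- Let X be a real Hilbert space, 0 < α ≤ C_M, C_r > 0. Let m : X × X → ℝ be a continuous symmetric bilinear form with α‖Φ‖² ≤ m(Φ, Φ) and |m(Φ, Ψ)| ≤ C_M‖Φ‖‖Ψ‖, and r : X × X → ℝ a continuous bilinear form with |r(Φ, Ψ)| ≤ C_r‖Φ‖‖Ψ‖. Let V_H ⊆ X be a closed subspace carrying a continuous symmetric bilinear form m_H with α‖Φ_H‖² ≤ m_H(Φ_H, Φ_H), and a bilinear form r_H : V_H × V_H → ℝ; write ‖Φ_H‖_{m_H} := √m_H(Φ_H, Φ_H). Let P_H : X → V_H satisfy m_H(P_H Φ, Ψ_H) = m(Φ, Ψ_H) for all Ψ_H ∈ V_H, let B : X → X satisfy m(B Φ, Ψ) = r(Φ, Ψ) for all Φ,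 Ψ ∈ X, and let B_H : V_H → V_H satisfy m_H(B_H Φ_H, Ψ_H) = r_H(Φ_H, Ψ_H) for all Φ_H, Ψ_H ∈ V_H. Then for every Φ ∈ X and Φ_I ∈ V_H: ‖P_H(B Φ) − B_H(Φ_I)‖_{m_H} ≤ (C_r / √α) ‖Φ − Φ_I‖ + sup { |r(Φ_I, Ψ_H) − r_H(Φ_I, Ψ_H)| : Ψ_H ∈ V_H, ‖Ψ_H‖_{m_H} ≤ 1 }. -/
lemma bilin_cs_s16 {V : Type*} [AddCommGroup V] [Module ℝ V]
    (b : V →ₗ[ℝ] V →ₗ[ℝ] ℝ) (hs : ∀ x y, b x y = b y x) (hp : ∀ x, 0 ≤ b x x)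
    (x y : V) : |b x y| ≤ Real.sqrt (b x x) * Real.sqrt (b y y) := by
  have key : (b x y) ^ 2 ≤ b x x * b y y := by
    have h : ∀ t : ℝ, 0 ≤ (b y y) * (t * t) + (2 * b x y) * t + b x x := by
      intro t
      have h0 := hp (x + t • y)
      have e : b (x + t • y) (x + t • y)
          = b y y * t ^ 2 + 2 * b x y * t + b x x := by
        simp [map_add, map_smul, LinearMap.add_apply, LinearMap.smul_apply,
          smul_eq_mul, hs y x]
        ring
      rw [e] at h0; nlinarith
    have hd : discrim (b y y) (2 * b x y) (b x x) ≤ 0 := discrim_le_zero h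
    rw [discrim] at hd
    nlinarith
  calc |b x y| = Real.sqrt ((b x y) ^ 2) := by rw [Real.sqrt_sq_eq_abs]
    _ ≤ Real.sqrt (b x x * b y y) := Real.sqrt_le_sqrt key
    _ = _ := Real.sqrt_mul (hp x) _

/-- The remainder estimate for the damping operator in the HMM error analysis. -/
theorem hmm_remainder_estimate_damping
    {X : Type*} [NormedAddCommGroup X] [InnerProductSpace ℝ X] [CompleteSpace X]
    (α C_M C_r : ℝ) (hα : 0 < α) (hαC : α ≤ C_M) (hCr : 0 < C_r)
    (m r : X →ₗ[ℝ] X →ₗ[ℝ] ℝ)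
    (hmsymm : ∀ Φ Ψ : X, m Φ Ψ = m Ψ Φ)
    (hml : ∀ Φ : X, α * ‖Φ‖ ^ 2 ≤ m Φ Φ)
    (hmu : ∀ Φ Ψ : X, |m Φ Ψ| ≤ C_M * ‖Φ‖ * ‖Ψ‖)
    (hru : ∀ Φ Ψ : X, |r Φ Ψ| ≤ C_r * ‖Φ‖ * ‖Ψ‖)
    (VH : Submodule ℝ X) (hVH : IsClosed (VH : Set X))
    (mH : VH →ₗ[ℝ] VH →ₗ[ℝ] ℝ) (rH : VH →ₗ[ℝ] VH →ₗ[ℝ] ℝ)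
    (hmHsymm : ∀ ΦH ΨH : VH, mH ΦH ΨH = mH ΨH ΦH)
    (hmHcont : Continuous fun p : VH × VH => mH p.1 p.2)
    (hmHl : ∀ ΦH : VH, α * ‖ΦH‖ ^ 2 ≤ mH ΦH ΦH)
    (PH : X → VH) (hPH : ∀ (Φ : X) (ΨH : VH), mH (PH Φ) ΨH = m Φ (ΨH : X))
    (B : X → X) (hB : ∀ Φ Ψ : X, m (B Φ) Ψ = r Φ Ψ)
    (BH : VH → VH) (hBH : ∀ ΦH ΨH : VH, mH (BH ΦH) ΨH = rH ΦH ΨH)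
    (Φ : X) (ΦI : VH) :
    Real.sqrt (mH (PH (B Φ) - BH ΦI) (PH (B Φ) - BH ΦI)) ≤
      (C_r / Real.sqrt α) * ‖Φ - (ΦI : X)‖ +
        sSup {c : ℝ | ∃ ΨH : VH, Real.sqrt (mH ΨH ΨH) ≤ 1 ∧
          c = |r (ΦI : X) (ΨH : X) - rH ΦI ΨH|} := by
  have hmpos : ∀ x : VH, (0:ℝ) ≤ mH x x := fun x =>
    le_trans (by positivity) (hmHl x)
  set S : Set ℝ := {c : ℝ | ∃ ΨH : VH, Real.sqrt (mH ΨH ΨH) ≤ 1 ∧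
      c = |r (ΦI : X) (ΨH : X) - rH ΦI ΨH|} with hS
  have hαs : (0:ℝ) < Real.sqrt α := Real.sqrt_pos.mpr hα
  have h0S : (0:ℝ) ∈ S := ⟨0, by simp, by simp⟩
  have hBdd : BddAbove S := by
    refine ⟨C_r * ‖(ΦI : X)‖ * Real.sqrt (1/α) + Real.sqrt (mH (BH ΦI) (BH ΦI)), ?_⟩
    rintro c ⟨ΨH, hΨ, rfl⟩
    have hm1 : mH ΨH ΨH ≤ 1 := by
      have := Real.sq_sqrt (hmpos ΨH)
      nlinarith [Real.sqrt_nonneg ((mH ΨH) ΨH)]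
    have hn : ‖ΨH‖ ≤ Real.sqrt (1/α) := by
      rw [Real.le_sqrt (norm_nonneg _)]
      rw [le_div_iff₀ hα]
      nlinarith [hmHl ΨH]
      positivity
    have hn' : ‖(ΨH : X)‖ ≤ Real.sqrt (1/α) := hn
    have h1 : |r (ΦI : X) (ΨH : X)| ≤ C_r * ‖(ΦI : X)‖ * Real.sqrt (1/α) := by
      calc |r (ΦI : X) (ΨH : X)| ≤ C_r * ‖(ΦI : X)‖ * ‖(ΨH : X)‖ := hru _ _
        _ ≤ C_r * ‖(ΦI : X)‖ * Real.sqrt (1/α) := by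
            apply mul_le_mul_of_nonneg_left hn' (by positivity)
    have h2 : |rH ΦI ΨH| ≤ Real.sqrt (mH (BH ΦI) (BH ΦI)) := by
      have hcs := bilin_cs_s16 mH hmHsymm hmpos (BH ΦI) ΨH
      rw [hBH] at hcs
      calc |rH ΦI ΨH| ≤ Real.sqrt (mH (BH ΦI) (BH ΦI)) * Real.sqrt (mH ΨH ΨH) := hcs
        _ ≤ Real.sqrt (mH (BH ΦI) (BH ΦI)) * 1 :=
            mul_le_mul_of_nonneg_left hΨ (Real.sqrt_nonneg _)
        _ = _ := mul_one _
    calc |r (ΦI : X) (ΨH : X) - rH ΦI ΨH|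
        ≤ |r (ΦI : X) (ΨH : X)| + |rH ΦI ΨH| := abs_sub _ _
      _ ≤ _ := add_le_add h1 h2
  have hSpos : (0:ℝ) ≤ sSup S := le_csSup hBdd h0S
  obtain ⟨E, hEdef⟩ : ∃ E : VH, E = PH (B Φ) - BH ΦI := ⟨_, rfl⟩
  rw [← hEdef]
  obtain ⟨n, hn⟩ : ∃ n : ℝ, n = Real.sqrt (mH E E) := ⟨_, rfl⟩
  rw [← hn]
  have hn0 : 0 ≤ n := hn ▸ Real.sqrt_nonneg _
  have hnsq : n ^ 2 = mH E E := by rw [hn]; exact Real.sq_sqrt (hmpos E)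
  have hEfst : ∀ z : VH, mH E z = m (B Φ) (z : X) - rH ΦI z := by
    intro z
    rw [hEdef, map_sub, LinearMap.sub_apply, hPH, hBH]
  have hkey : (mH E E : ℝ) = r (Φ - (ΦI : X)) (E : X) + (r (ΦI : X) (E : X) - rH ΦI E) := by
    rw [hEfst E, hB, map_sub, LinearMap.sub_apply]
    ring
  have hEn : ‖(E : X)‖ * Real.sqrt α ≤ n := by
    have hsq : (‖(E : X)‖ * Real.sqrt α) ^ 2 ≤ n ^ 2 := by
      rw [mul_pow, Real.sq_sqrt hα.le, hnsq, show ‖(E : X)‖ = ‖E‖ from rfl]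
      nlinarith [hmHl E]
    calc ‖(E : X)‖ * Real.sqrt α
        = Real.sqrt ((‖(E : X)‖ * Real.sqrt α) ^ 2) :=
          (Real.sqrt_sq (by positivity)).symm
      _ ≤ Real.sqrt (n ^ 2) := Real.sqrt_le_sqrt hsq
      _ = n := Real.sqrt_sq hn0
  rcases eq_or_lt_of_le hn0 with hnz | hnpos
  · rw [← hnz]
    positivity
  · have hΨm : mH ((n⁻¹ • E : VH)) (n⁻¹ • E) = 1 := by
      simp only [map_smul, LinearMap.smul_apply, smul_eq_mul]
      rw [← hnsq]
      field_simp
    have hΨS : |r (ΦI : X) ((n⁻¹ • E : VH) : X) - rH ΦI (n⁻¹ • E)| ∈ S :=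
      ⟨n⁻¹ • E, by rw [hΨm]; norm_num, rfl⟩
    have hΨle : |r (ΦI : X) ((n⁻¹ • E : VH) : X) - rH ΦI (n⁻¹ • E)| ≤ sSup S :=
      le_csSup hBdd hΨS
    have hsplit : r (ΦI : X) ((n⁻¹ • E : VH) : X) - rH ΦI (n⁻¹ • E)
        = n⁻¹ * (r (ΦI : X) (E : X) - rH ΦI E) := by
      rw [show ((n⁻¹ • E : VH) : X) = n⁻¹ • (E : X) from rfl]
      simp only [map_smul, LinearMap.smul_apply, smul_eq_mul]
      ring
    have habs : |r (ΦI : X) (E : X) - rH ΦI E| ≤ n * sSup S := by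
      rw [hsplit, abs_mul, abs_of_pos (inv_pos.mpr hnpos)] at hΨle
      calc |r (ΦI : X) (E : X) - rH ΦI E|
          = n * (n⁻¹ * |r (ΦI : X) (E : X) - rH ΦI E|) := by field_simp
        _ ≤ n * sSup S := mul_le_mul_of_nonneg_left hΨle hn0
    have hterm1 : |r (Φ - (ΦI : X)) (E : X)| ≤ C_r * ‖Φ - (ΦI : X)‖ * ‖(E : X)‖ := hru _ _
    have hchain : n ^ 2 ≤ C_r * ‖Φ - (ΦI : X)‖ * ‖(E : X)‖ + n * sSup S := by
      rw [hnsq, hkey]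
      have t1 := abs_le.mp hterm1
      have t2 := abs_le.mp habs
      linarith
    have hEn2 : ‖(E : X)‖ ≤ n / Real.sqrt α := by
      rw [le_div_iff₀ hαs]; exact hEn
    have hchain2 : n * n ≤ ((C_r / Real.sqrt α) * ‖Φ - (ΦI : X)‖ + sSup S) * n := by
      have hmono : C_r * ‖Φ - (ΦI : X)‖ * ‖(E : X)‖
          ≤ C_r * ‖Φ - (ΦI : X)‖ * (n / Real.sqrt α) :=
        mul_le_mul_of_nonneg_left hEn2 (by positivity)
      have hrw : C_r * ‖Φ - (ΦI : X)‖ * (n / Real.sqrt α)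
          = (C_r / Real.sqrt α * ‖Φ - (ΦI : X)‖) * n := by ring
      nlinarith [hchain, hmono]
    exact le_of_mul_le_mul_right hchain2 hnpos
end

section
/- Let X be a real Hilbert space, 0 < α, C_g > 0, m : X × X → ℝ a continuous symmetric bilinear form with α‖Φ‖² ≤ m(Φ, Φ), and V_H ⊆ X a closed subspace with a continuous symmetric bilinear form m_H satisfying α‖Φ_H‖² ≤ m_H(Φ_H, Φ_H); write ‖Φ_H‖_{m_H} := √m_H(Φ_H, Φ_H). Let P_H : X → V_H satisfy m_H(P_H Φ, Ψ_H) = m(Φ, Ψ_H) for all Ψ_H ∈ V_H. For each τ ≥ 0 let g(τ; ·, ·) : X × X → ℝ and g_H(τ; ·, ·) : V_H × V_H → ℝ be bilinear forms with |g(τ; Φ, Ψ)| ≤ C_g‖Φ‖‖Ψ‖ for all τ, Φ, Ψ, and let G(τ) : X → X and G_H(τ) : V_H → V_H satisfy m(G(τ)Φ, Ψ) = g(τ; Φ, Ψ) and m_H(G_H(τ)Φ_H, Ψ_H) = g_H(τ; Φ_H, Ψ_H); assume τ ↦ G(τ) and τ ↦ G_H(τ) are continuous in operator norm. Then for every s ≥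 0 and all continuous Φ : [0, s] → X and Φ_I : [0, s] → V_H: ‖∫₀ˢ ( P_H(G(s − ρ)(Φ(ρ))) − G_H(s − ρ)(Φ_I(ρ)) ) dρ‖_{m_H} ≤ (C_g / √α) ∫₀ˢ ‖Φ(ρ) − Φ_I(ρ)‖ dρ + sup { |∫₀ˢ ( g(s − ρ; Φ_I(ρ), Ψ_H) − g_H(s − ρ; Φ_I(ρ), Ψ_H) ) dρ| : Ψ_H ∈ V_H, ‖Ψ_H‖_{m_H} ≤ 1 }. -/
/-!
Write `E = ∫₀ˢ (P_H G(s-ρ) Φ(ρ) - G_H(s-ρ) Φ_I(ρ)) dρ`. Pairing with a test function `Ψ ∈ V_H`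
and using the defining relations of `P_H`, `G` and `G_H` splits `m_H(E, Ψ)` into the consistency
part `∫₀ˢ g(s-ρ; Φ(ρ) - Φ_I(ρ), Ψ) dρ`, bounded by `C_g ∫₀ˢ ‖Φ - Φ_I‖ · ‖Ψ‖`, and the conformity
part, bounded by the supremum. Testing with `Ψ = E / ‖E‖_{m_H}` and using coercivity,
`‖Ψ‖ ≤ ‖Ψ‖_{m_H} / √α`, gives the estimate. The supremum is finite because the conformity part
is the difference of two terms that are both bounded on the `m_H`-unit ball.
-/

open Set MeasureTheory

theorem LinearMap.exists_bound_of_continuous_uncurry {𝕜 E F G : Type*}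
    [NontriviallyNormedField 𝕜] [NormedAddCommGroup E] [NormedSpace 𝕜 E]
    [NormedAddCommGroup F] [NormedSpace 𝕜 F] [NormedAddCommGroup G] [NormedSpace 𝕜 G]
    (B : E →ₗ[𝕜] F →ₗ[𝕜] G) (hB : Continuous fun p : E × F => B p.1 p.2) :
    ∃ C, 0 ≤ C ∧ ∀ x y, ‖B x y‖ ≤ C * ‖x‖ * ‖y‖ := by
  let B' : E →ₗ[𝕜] F →L[𝕜] G :=
    { toFun := fun x => ⟨B x, hB.comp (Continuous.prodMk_right x)⟩
      map_add' := fun x y => by ext; simp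
      map_smul' := fun c x => by ext; simp }
  let B'' : E →L[𝕜] F →L[𝕜] G := ⟨B', ContinuousLinearMap.continuous_of_continuous_uncurry B' hB⟩
  exact ⟨‖B''‖, B''.opNorm_nonneg, B''.le_opNorm₂⟩

theorem LinearMap.apply_intervalIntegral_left {V W : Type*} [NormedAddCommGroup V]
    [NormedSpace ℝ V] [CompleteSpace V] [NormedAddCommGroup W] [NormedSpace ℝ W]
    (B : V →ₗ[ℝ] W →ₗ[ℝ] ℝ) (hB : Continuous fun p : V × W => B p.1 p.2)
    {μ : Measure ℝ} {f : ℝ → V} {a b : ℝ} (hf : IntervalIntegrable f μ a b) (w : W) :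
    B (∫ ρ in a..b, f ρ ∂μ) w = ∫ ρ in a..b, B (f ρ) w ∂μ :=
  (ContinuousLinearMap.intervalIntegral_comp_comm
    ⟨B.flip w, hB.comp (continuous_id.prodMk continuous_const)⟩ hf).symm

theorem ContinuousOn.clm_apply_const_sub {E F : Type*} [NormedAddCommGroup E]
    [NormedSpace ℝ E] [NormedAddCommGroup F] [NormedSpace ℝ F]
    {G : ℝ → E →L[ℝ] F} (hG : ContinuousOn G (Ici 0)) {s : ℝ} {Φ : ℝ → E}
    (hΦ : ContinuousOn Φ (Icc 0 s)) : ContinuousOn (fun ρ => G (s - ρ) (Φ ρ)) (Icc 0 s) :=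
  (hG.comp (by fun_prop) fun _ hρ => sub_nonneg.2 hρ.2).clm_apply hΦ

theorem LinearMap.apply_intervalIntegral_eq_add {V W : Type*} [NormedAddCommGroup V]
    [NormedSpace ℝ V] [CompleteSpace V] [NormedAddCommGroup W] [NormedSpace ℝ W]
    (B : V →ₗ[ℝ] W →ₗ[ℝ] ℝ) (hB : Continuous fun p : V × W => B p.1 p.2)
    {f : ℝ → V} {u v : ℝ → ℝ} {a b : ℝ} (hab : a ≤ b) (hf : ContinuousOn f (Icc a b))
    (hu : ContinuousOn u (Icc a b)) {w : W} (h : ∀ ρ ∈ Icc a b, B (f ρ) w = u ρ + v ρ) :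
    B (∫ ρ in a..b, f ρ) w = (∫ ρ in a..b, u ρ) + ∫ ρ in a..b, v ρ := by
  have hBf : ContinuousOn (fun ρ => B (f ρ) w) (Icc a b) :=
    hB.comp_continuousOn (hf.prodMk continuousOn_const)
  rw [B.apply_intervalIntegral_left hB (hf.intervalIntegrable_of_Icc hab), ← sub_eq_iff_eq_add',
    ← intervalIntegral.integral_sub (hBf.intervalIntegrable_of_Icc hab)
      (hu.intervalIntegrable_of_Icc hab)]
  refine intervalIntegral.integral_congr fun ρ hρ => ?_
  rw [uIcc_of_le hab] at hρ
  simp only [h ρ hρ, add_sub_cancel_left]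

theorem abs_intervalIntegral_apply_le {E F : Type*} [NormedAddCommGroup E] [NormedSpace ℝ E]
    [NormedAddCommGroup F] [NormedSpace ℝ F] {B : ℝ → E →ₗ[ℝ] F →ₗ[ℝ] ℝ} {C a b : ℝ}
    (hab : a ≤ b) (hB : ∀ ρ ∈ Ioc a b, ∀ x y, |B ρ x y| ≤ C * ‖x‖ * ‖y‖) {u : ℝ → E}
    (hu : ContinuousOn u (Icc a b)) (y : F) :
    |∫ ρ in a..b, B ρ (u ρ) y| ≤ C * (∫ ρ in a..b, ‖u ρ‖) * ‖y‖ :=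
  calc |∫ ρ in a..b, B ρ (u ρ) y| = ‖∫ ρ in a..b, B ρ (u ρ) y‖ := (Real.norm_eq_abs _).symm
    _ ≤ ∫ ρ in a..b, C * ‖u ρ‖ * ‖y‖ :=
      intervalIntegral.norm_integral_le_of_norm_le hab (ae_of_all _ fun ρ hρ => hB ρ hρ _ _)
        ((hu.norm.intervalIntegrable_of_Icc hab).const_mul C |>.mul_const _)
    _ = C * (∫ ρ in a..b, ‖u ρ‖) * ‖y‖ := by
      rw [intervalIntegral.integral_mul_const, intervalIntegral.integral_const_mul]

section CoerciveForm

variable {V : Type*} [NormedAddCommGroup V] [NormedSpace ℝ V] {b : V →ₗ[ℝ] V →ₗ[ℝ] ℝ} {α : ℝ}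

theorem sqrt_mul_norm_le_sqrt_apply_self (hb : ∀ v, α * ‖v‖ ^ 2 ≤ b v v) (hα : 0 ≤ α) (v : V) :
    √α * ‖v‖ ≤ √(b v v) := by
  simpa [Real.sqrt_mul hα, Real.sqrt_sq (norm_nonneg v)] using Real.sqrt_le_sqrt (hb v)

theorem norm_le_inv_sqrt_of_sqrt_apply_self_le_one (hb : ∀ v, α * ‖v‖ ^ 2 ≤ b v v)
    (hα : 0 < α) {v : V} (hv : √(b v v) ≤ 1) : ‖v‖ ≤ 1 / √α := by
  rw [le_div_iff₀' (Real.sqrt_pos.2 hα)]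
  exact (sqrt_mul_norm_le_sqrt_apply_self hb hα.le v).trans hv

theorem continuous_of_apply_eq_of_coercive {W : Type*} [NormedAddCommGroup W] [NormedSpace ℝ W]
    (hb : ∀ v, α * ‖v‖ ^ 2 ≤ b v v) (hα : 0 < α) {c : W →ₗ[ℝ] V →ₗ[ℝ] ℝ} {C : ℝ}
    (hc : ∀ x v, |c x v| ≤ C * ‖x‖ * ‖v‖) {P : W → V} (hP : ∀ x v, b (P x) v = c x v) :
    Continuous P := by
  refine (LipschitzWith.of_dist_le_mul (K := Real.toNNReal (C / α)) fun x y => ?_).continuous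
  set D := P x - P y
  have hD : α * ‖D‖ ^ 2 ≤ C * ‖x - y‖ * ‖D‖ :=
    calc α * ‖D‖ ^ 2 ≤ b D D := hb D
      _ = c (x - y) D := by simp only [D, map_sub, LinearMap.sub_apply, hP]
      _ ≤ C * ‖x - y‖ * ‖D‖ := (le_abs_self _).trans (hc _ _)
  rw [dist_eq_norm, dist_eq_norm]
  rcases (norm_nonneg D).eq_or_lt with h0 | hpos
  · rw [← h0]; positivity
  · refine le_trans ?_ (mul_le_mul_of_nonneg_right (Real.le_coe_toNNReal _) (norm_nonneg _))
    rw [div_mul_eq_mul_div, le_div_iff₀ hα]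
    nlinarith

theorem bddAbove_abs_of_eq_add (hb : ∀ v, α * ‖v‖ ^ 2 ≤ b v v) (hα : 0 < α) {C K : ℝ}
    (hC : 0 ≤ C) (hbC : ∀ x y, |b x y| ≤ C * ‖x‖ * ‖y‖) (hK : 0 ≤ K) {E : V} {a ℓ : V → ℝ}
    (hsplit : ∀ Ψ, b E Ψ = a Ψ + ℓ Ψ) (ha : ∀ Ψ, |a Ψ| ≤ K * ‖Ψ‖) :
    BddAbove {c : ℝ | ∃ Ψ : V, √(b Ψ Ψ) ≤ 1 ∧ c = |ℓ Ψ|} := by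
  refine ⟨(C * ‖E‖ + K) * (1 / √α), ?_⟩
  rintro _ ⟨Ψ, hΨ, rfl⟩
  calc |ℓ Ψ| = |b E Ψ - a Ψ| := by rw [hsplit]; ring_nf
    _ ≤ |b E Ψ| + |a Ψ| := abs_sub _ _
    _ ≤ (C * ‖E‖ + K) * ‖Ψ‖ := by nlinarith [hbC E Ψ, ha Ψ]
    _ ≤ (C * ‖E‖ + K) * (1 / √α) := by
      gcongr
      exact norm_le_inv_sqrt_of_sqrt_apply_self_le_one hb hα hΨ

theorem sqrt_apply_self_le_of_eq_add (hb : ∀ v, α * ‖v‖ ^ 2 ≤ b v v) (hα : 0 < α) {C K : ℝ}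
    (hC : 0 ≤ C) (hbC : ∀ x y, |b x y| ≤ C * ‖x‖ * ‖y‖) (hK : 0 ≤ K) {E : V} {a ℓ : V → ℝ}
    (hsplit : ∀ Ψ, b E Ψ = a Ψ + ℓ Ψ) (ha : ∀ Ψ, |a Ψ| ≤ K * ‖Ψ‖) :
    √(b E E) ≤ K / √α + sSup {c : ℝ | ∃ Ψ : V, √(b Ψ Ψ) ≤ 1 ∧ c = |ℓ Ψ|} := by
  have hSup : ∀ Ψ, √(b Ψ Ψ) ≤ 1 → |ℓ Ψ| ≤ sSup {c : ℝ | ∃ Ψ : V, √(b Ψ Ψ) ≤ 1 ∧ c = |ℓ Ψ|} :=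
    fun Ψ hΨ => le_csSup (bddAbove_abs_of_eq_add hb hα hC hbC hK hsplit ha) ⟨Ψ, hΨ, rfl⟩
  rcases (Real.sqrt_nonneg (b E E)).eq_or_lt with hN | hN
  · rw [← hN]
    exact add_nonneg (by positivity) ((abs_nonneg _).trans (hSup 0 (by simp)))
  set N := √(b E E)
  have hEE : b E E = N ^ 2 :=
    (Real.sq_sqrt ((by positivity : (0 : ℝ) ≤ α * ‖E‖ ^ 2).trans (hb E))).symm
  set Ψ₀ := N⁻¹ • E
  have hΨ₀ : √(b Ψ₀ Ψ₀) ≤ 1 := by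
    simp only [Ψ₀, map_smul, LinearMap.smul_apply, smul_eq_mul, hEE]
    rw [← mul_assoc, ← sq, inv_pow, inv_mul_cancel₀ (by positivity), Real.sqrt_one]
  calc N = b E Ψ₀ := by simp only [Ψ₀, map_smul, smul_eq_mul, hEE]; field_simp
    _ = a Ψ₀ + ℓ Ψ₀ := hsplit Ψ₀
    _ ≤ K * ‖Ψ₀‖ + |ℓ Ψ₀| := add_le_add ((le_abs_self _).trans (ha Ψ₀)) (le_abs_self _)
    _ ≤ K * (1 / √α) + sSup {c : ℝ | ∃ Ψ : V, √(b Ψ Ψ) ≤ 1 ∧ c = |ℓ Ψ|} := by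
      gcongr
      · exact norm_le_inv_sqrt_of_sqrt_apply_self_le_one hb hα hΨ₀
      · exact hSup Ψ₀ hΨ₀
    _ = _ := by ring

end CoerciveForm

theorem hmm_remainder_estimate_convolution_general
    {X : Type*} [NormedAddCommGroup X] [InnerProductSpace ℝ X] [CompleteSpace X]
    (α C_g : ℝ) (hα : 0 < α) (hCg : 0 < C_g)
    (m : X →ₗ[ℝ] X →ₗ[ℝ] ℝ)
    (hmcont : Continuous fun p : X × X => m p.1 p.2)
    (VH : Submodule ℝ X) (hVH : IsClosed (VH : Set X))
    (mH : VH →ₗ[ℝ] VH →ₗ[ℝ] ℝ)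
    (hmHcont : Continuous fun p : VH × VH => mH p.1 p.2)
    (hmHl : ∀ ΦH : VH, α * ‖ΦH‖ ^ 2 ≤ mH ΦH ΦH)
    (PH : X → VH) (hPH : ∀ (Φ : X) (ΨH : VH), mH (PH Φ) ΨH = m Φ (ΨH : X))
    (g : ℝ → X →ₗ[ℝ] X →ₗ[ℝ] ℝ) (gH : ℝ → VH →ₗ[ℝ] VH →ₗ[ℝ] ℝ)
    (hg : ∀ τ : ℝ, 0 ≤ τ → ∀ Φ Ψ : X, |g τ Φ Ψ| ≤ C_g * ‖Φ‖ * ‖Ψ‖)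
    (G : ℝ → X →L[ℝ] X) (GH : ℝ → VH →L[ℝ] VH)
    (hG : ∀ τ : ℝ, 0 ≤ τ → ∀ Φ Ψ : X, m (G τ Φ) Ψ = g τ Φ Ψ)
    (hGH : ∀ τ : ℝ, 0 ≤ τ → ∀ ΦH ΨH : VH, mH (GH τ ΦH) ΨH = gH τ ΦH ΨH)
    (hGcont : ContinuousOn G (Set.Ici 0)) (hGHcont : ContinuousOn GH (Set.Ici 0))
    (s : ℝ) (hs : 0 ≤ s)
    (Φ : ℝ → X) (ΦI : ℝ → VH)
    (hΦ : ContinuousOn Φ (Set.Icc 0 s)) (hΦI : ContinuousOn ΦI (Set.Icc 0 s)) :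
    Real.sqrt (mH (∫ ρ in (0:ℝ)..s, (PH (G (s - ρ) (Φ ρ)) - GH (s - ρ) (ΦI ρ)))
        (∫ ρ in (0:ℝ)..s, (PH (G (s - ρ) (Φ ρ)) - GH (s - ρ) (ΦI ρ)))) ≤
      (C_g / Real.sqrt α) * (∫ ρ in (0:ℝ)..s, ‖Φ ρ - (ΦI ρ : X)‖) +
        sSup {c : ℝ | ∃ ΨH : VH, Real.sqrt (mH ΨH ΨH) ≤ 1 ∧
          c = |∫ ρ in (0:ℝ)..s,
                (g (s - ρ) ((ΦI ρ : X)) (ΨH : X) - gH (s - ρ) (ΦI ρ) ΨH)|} := by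
  have : CompleteSpace VH := hVH.completeSpace_coe
  have hτ : ∀ ρ ∈ Icc 0 s, 0 ≤ s - ρ := fun ρ hρ => sub_nonneg.2 hρ.2
  have hΦIX : ContinuousOn (fun ρ => (ΦI ρ : X)) (Icc 0 s) :=
    continuous_subtype_val.comp_continuousOn hΦI
  obtain ⟨Cm, -, hCm⟩ := m.exists_bound_of_continuous_uncurry hmcont
  obtain ⟨CmH, hCmH0, hCmH⟩ := mH.exists_bound_of_continuous_uncurry hmHcont
  have hPHc : Continuous PH :=
    continuous_of_apply_eq_of_coercive (c := m.compl₂ VH.subtype) hmHl hα (fun x v => hCm x v) hPH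
  have hf : ContinuousOn (fun ρ => PH (G (s - ρ) (Φ ρ)) - GH (s - ρ) (ΦI ρ)) (Icc 0 s) :=
    (hPHc.comp_continuousOn (hGcont.clm_apply_const_sub hΦ)).sub (hGHcont.clm_apply_const_sub hΦI)
  have hA : ∀ Ψ : VH, ContinuousOn (fun ρ => g (s - ρ) (Φ ρ - ΦI ρ) Ψ) (Icc 0 s) := fun Ψ =>
    (hmcont.comp_continuousOn ((hGcont.clm_apply_const_sub (hΦ.sub hΦIX)).prodMk
      continuousOn_const)).congr fun ρ hρ => (hG _ (hτ ρ hρ) _ _).symm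
  have hI : 0 ≤ ∫ ρ in (0:ℝ)..s, ‖Φ ρ - (ΦI ρ : X)‖ :=
    intervalIntegral.integral_nonneg hs fun _ _ => norm_nonneg _
  refine (sqrt_apply_self_le_of_eq_add hmHl hα hCmH0 (fun x y => hCmH x y) (mul_nonneg hCg.le hI)
    (fun Ψ => mH.apply_intervalIntegral_eq_add hmHcont hs hf (hA Ψ) fun ρ hρ => ?_)
    (fun Ψ => abs_intervalIntegral_apply_le hs (fun ρ hρ => hg _ (hτ ρ (Ioc_subset_Icc_self hρ)))
      (hΦ.sub hΦIX) _)).trans_eq (by ring)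
  simp only [map_sub, LinearMap.sub_apply, hPH, hG _ (hτ ρ hρ), hGH _ (hτ ρ hρ)]
  ring

/-- The remainder estimate for the memory (convolution) term in the semi-discrete
HMM error analysis. -/
theorem hmm_remainder_estimate_convolution
    {X : Type*} [NormedAddCommGroup X] [InnerProductSpace ℝ X] [CompleteSpace X]
    (α C_g : ℝ) (hα : 0 < α) (hCg : 0 < C_g)
    (m : X →ₗ[ℝ] X →ₗ[ℝ] ℝ)
    (hmsymm : ∀ Φ Ψ : X, m Φ Ψ = m Ψ Φ)
    (hml : ∀ Φ : X, α * ‖Φ‖ ^ 2 ≤ m Φ Φ)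
    (hmcont : Continuous fun p : X × X => m p.1 p.2)
    (VH : Submodule ℝ X) (hVH : IsClosed (VH : Set X))
    (mH : VH →ₗ[ℝ] VH →ₗ[ℝ] ℝ)
    (hmHsymm : ∀ ΦH ΨH : VH, mH ΦH ΨH = mH ΨH ΦH)
    (hmHcont : Continuous fun p : VH × VH => mH p.1 p.2)
    (hmHl : ∀ ΦH : VH, α * ‖ΦH‖ ^ 2 ≤ mH ΦH ΦH)
    (PH : X → VH) (hPH : ∀ (Φ : X) (ΨH : VH), mH (PH Φ) ΨH = m Φ (ΨH : X))
    (g : ℝ → X →ₗ[ℝ] X →ₗ[ℝ] ℝ) (gH : ℝ → VH →ₗ[ℝ] VH →ₗ[ℝ] ℝ)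
    (hg : ∀ τ : ℝ, 0 ≤ τ → ∀ Φ Ψ : X, |g τ Φ Ψ| ≤ C_g * ‖Φ‖ * ‖Ψ‖)
    (G : ℝ → X →L[ℝ] X) (GH : ℝ → VH →L[ℝ] VH)
    (hG : ∀ τ : ℝ, 0 ≤ τ → ∀ Φ Ψ : X, m (G τ Φ) Ψ = g τ Φ Ψ)
    (hGH : ∀ τ : ℝ, 0 ≤ τ → ∀ ΦH ΨH : VH, mH (GH τ ΦH) ΨH = gH τ ΦH ΨH)
    (hGcont : ContinuousOn G (Set.Ici 0)) (hGHcont : ContinuousOn GH (Set.Ici 0))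
    (s : ℝ) (hs : 0 ≤ s)
    (Φ : ℝ → X) (ΦI : ℝ → VH)
    (hΦ : ContinuousOn Φ (Set.Icc 0 s)) (hΦI : ContinuousOn ΦI (Set.Icc 0 s)) :
    Real.sqrt (mH (∫ ρ in (0:ℝ)..s, (PH (G (s - ρ) (Φ ρ)) - GH (s - ρ) (ΦI ρ)))
        (∫ ρ in (0:ℝ)..s, (PH (G (s - ρ) (Φ ρ)) - GH (s - ρ) (ΦI ρ)))) ≤
      (C_g / Real.sqrt α) * (∫ ρ in (0:ℝ)..s, ‖Φ ρ - (ΦI ρ : X)‖) +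
        sSup {c : ℝ | ∃ ΨH : VH, Real.sqrt (mH ΨH ΨH) ≤ 1 ∧
          c = |∫ ρ in (0:ℝ)..s,
                (g (s - ρ) ((ΦI ρ : X)) (ΨH : X) - gH (s - ρ) (ΦI ρ) ΨH)|} :=
  hmm_remainder_estimate_convolution_general α C_g hα hCg m hmcont VH hVH mH hmHcont hmHl PH hPH g
    gH hg G GH hG hGH hGcont hGHcont s hs Φ ΦI hΦ hΦI
end
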